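/- arXiv:2601.20399 — 7 statements merged into one kernel-verified Lean document; each statement's English description precedes it below -/
import Mathlib

section
/- Let X be an ℝ^d-valued random vector with E[X] = 0 such that there exists σ' > 0 with E[exp(⟨u, X⟩)] ≤ exp(‖u‖²σ'²) for all u ∈ ℝ^d. Then, setting σ̄ := 24√e · σ', for all λ ∈ ℝ with |λ| ≤ 1/σ̄ one has E[exp(λ²‖X‖²)] ≤ 5^d · exp(λ²σ̄²). -/
/-!
Gaussian linearization: for a standard Gaussian vector `g`, `E_g[exp ⟪a g, x⟫] = exp (a² ‖x‖² / 2)`.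
Taking `a² = 2 l²` and exchanging the expectations over `g` and `X` (Tonelli), the bound on the
moment generating function of `X` gives
`E[exp (l² ‖X‖²)] ≤ E_g[exp (2 l² σ² ‖g‖²)] = (1 - 4 l² σ²)^(-d/2)`.
For `|l| ≤ 1/σ̄` one has `4 l² σ² ≤ 1/2`, so this is at most `√2 ^ d ≤ 5 ^ d`.
-/

open MeasureTheory ProbabilityTheory Real
open scoped RealInnerProductSpace

lemma gaussianPDFReal_zero_one_mul_exp_mul_sq (c x : ℝ) :
    gaussianPDFReal 0 1 x * exp (c * x ^ 2) = (√(2 * π))⁻¹ * exp (-(1 / 2 - c) * x ^ 2) := by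
  rw [gaussianPDFReal, NNReal.coe_one, mul_one, sub_zero, mul_assoc, ← exp_add]
  congr 2
  ring

lemma integrable_exp_mul_sq_gaussianReal {c : ℝ} (hc : c < 1 / 2) :
    Integrable (fun x ↦ exp (c * x ^ 2)) (gaussianReal 0 1) := by
  rw [gaussianReal_of_var_ne_zero _ one_ne_zero, gaussianPDF_def,
    integrable_withDensity_iff_integrable_smul' (by fun_prop) (by simp)]
  simp only [ENNReal.toReal_ofReal (gaussianPDFReal_nonneg _ _ _), smul_eq_mul,
    gaussianPDFReal_zero_one_mul_exp_mul_sq]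
  exact (integrable_exp_neg_mul_sq (by linarith)).const_mul _

-- For `c ≥ 1/2` both sides are the junk value `0`.
lemma integral_exp_mul_sq_gaussianReal (c : ℝ) :
    ∫ x, exp (c * x ^ 2) ∂gaussianReal 0 1 = (√(1 - 2 * c))⁻¹ := by
  simp only [integral_gaussianReal_eq_integral_smul one_ne_zero, smul_eq_mul,
    gaussianPDFReal_zero_one_mul_exp_mul_sq, integral_const_mul, integral_gaussian]
  rw [← sqrt_inv, ← sqrt_mul (by positivity), ← sqrt_inv]
  congr 1
  field_simp

lemma OrthonormalBasis.exp_mul_norm_sum_smul_sq {E ι : Type*} [NormedAddCommGroup E]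
    [InnerProductSpace ℝ E] [Fintype ι] (b : OrthonormalBasis ι ℝ E) (c : ℝ) (x : ι → ℝ) :
    exp (c * ‖∑ i, x i • b i‖ ^ 2) = ∏ i, exp (c * x i ^ 2) := by
  rw [b.sum_repr_symm, b.repr.symm.norm_map, EuclideanSpace.real_norm_sq_eq, Finset.mul_sum,
    exp_sum]

section stdGaussian

variable {E : Type*} [NormedAddCommGroup E] [InnerProductSpace ℝ E] [FiniteDimensional ℝ E]
  [MeasurableSpace E] [BorelSpace E]

lemma map_innerSL_stdGaussian (x : E) :
    (stdGaussian E).map (innerSL ℝ x) = gaussianReal 0 (‖x‖ ^ 2).toNNReal := by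
  rw [IsGaussian.map_eq_gaussianReal, integral_strongDual_stdGaussian, variance_dual_stdGaussian,
    innerSL_apply_norm]

lemma lintegral_exp_inner_stdGaussian (x : E) :
    ∫⁻ g, ENNReal.ofReal (exp ⟪x, g⟫) ∂stdGaussian E = ENNReal.ofReal (exp (‖x‖ ^ 2 / 2)) := by
  have h := lintegral_map (μ := stdGaussian E) (f := fun t ↦ ENNReal.ofReal (exp t)) (by fun_prop)
    (innerSL ℝ x).continuous.measurable
  simp only [innerSL_apply_apply] at h
  rw [← h, map_innerSL_stdGaussian, ← ofReal_integral_eq_lintegral_ofReal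
    (by simpa using integrable_exp_mul_gaussianReal (μ := 0) (v := (‖x‖ ^ 2).toNNReal) 1)
    (ae_of_all _ fun _ ↦ (exp_pos _).le)]
  have hmgf := congrFun (mgf_id_gaussianReal (μ := 0) (v := (‖x‖ ^ 2).toNNReal)) 1
  simp only [mgf, id, one_mul, zero_add, one_pow, mul_one] at hmgf
  rw [hmgf, Real.coe_toNNReal _ (by positivity)]

lemma integrable_exp_mul_sq_norm_stdGaussian {c : ℝ} (hc : c < 1 / 2) :
    Integrable (fun g ↦ exp (c * ‖g‖ ^ 2)) (stdGaussian E) := by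
  rw [stdGaussian, integrable_map_measure (by fun_prop) (Measurable.aemeasurable (by fun_prop))]
  simp only [Function.comp_def, OrthonormalBasis.exp_mul_norm_sum_smul_sq]
  exact Integrable.fintype_prod (f := fun _ x ↦ exp (c * x ^ 2))
    fun _ ↦ integrable_exp_mul_sq_gaussianReal hc

lemma integral_exp_mul_sq_norm_stdGaussian (c : ℝ) :
    ∫ g, exp (c * ‖g‖ ^ 2) ∂stdGaussian E = (√(1 - 2 * c))⁻¹ ^ Module.finrank ℝ E := by
  rw [stdGaussian, integral_map (Measurable.aemeasurable (by fun_prop)) (by fun_prop)]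
  simp only [OrthonormalBasis.exp_mul_norm_sum_smul_sq]
  rw [integral_fintype_prod_eq_pow (fun x ↦ exp (c * x ^ 2)), integral_exp_mul_sq_gaussianReal,
    Fintype.card_fin]

end stdGaussian

section SubGaussianVector

variable {Ω E : Type*} {mΩ : MeasurableSpace Ω} {μ : Measure Ω} [NormedAddCommGroup E]
  [InnerProductSpace ℝ E] {X : Ω → E}

lemma integrable_exp_inner_of_integrable_exp_mul_sq_norm (hX : AEStronglyMeasurable X μ)
    {l : ℝ} (hl : l ≠ 0) (h : Integrable (fun ω ↦ exp (l ^ 2 * ‖X ω‖ ^ 2)) μ) (u : E) :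
    Integrable (fun ω ↦ exp ⟪u, X ω⟫) μ := by
  refine (h.const_mul (exp (‖u‖ ^ 2 / (4 * l ^ 2)))).mono'
    ((continuous_exp.comp (continuous_const.inner continuous_id)).comp_aestronglyMeasurable hX)
    (ae_of_all _ fun ω ↦ ?_)
  rw [norm_of_nonneg (exp_pos _).le, ← exp_add, exp_le_exp]
  have hyoung : ‖u‖ * ‖X ω‖ ≤ ‖u‖ ^ 2 / (4 * l ^ 2) + l ^ 2 * ‖X ω‖ ^ 2 := by
    rw [div_add' _ _ _ (by positivity), le_div_iff₀ (by positivity)]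
    nlinarith [sq_nonneg (‖u‖ - 2 * l ^ 2 * ‖X ω‖)]
  exact (real_inner_le_norm u (X ω)).trans hyoung

variable [FiniteDimensional ℝ E] [MeasurableSpace E] [BorelSpace E] [SFinite μ]

theorem lintegral_exp_mul_sq_norm_le (hX : Measurable X) {σ : ℝ}
    (hmgf : ∀ u, ∫⁻ ω, ENNReal.ofReal (exp ⟪u, X ω⟫) ∂μ ≤ ENNReal.ofReal (exp (‖u‖ ^ 2 * σ ^ 2)))
    {l : ℝ} (hl : 4 * l ^ 2 * σ ^ 2 < 1) :
    ∫⁻ ω, ENNReal.ofReal (exp (l ^ 2 * ‖X ω‖ ^ 2)) ∂μ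
      ≤ ENNReal.ofReal ((√(1 - 4 * l ^ 2 * σ ^ 2))⁻¹ ^ Module.finrank ℝ E) := by
  set a := √2 * l
  have ha : a ^ 2 = 2 * l ^ 2 := by rw [mul_pow, sq_sqrt zero_le_two]
  calc ∫⁻ ω, ENNReal.ofReal (exp (l ^ 2 * ‖X ω‖ ^ 2)) ∂μ
      = ∫⁻ ω, ∫⁻ g, ENNReal.ofReal (exp ⟪a • g, X ω⟫) ∂stdGaussian E ∂μ := by
        refine lintegral_congr fun ω ↦ ?_
        have hswap : ∀ g, ⟪a • g, X ω⟫ = ⟪a • X ω, g⟫ := fun g ↦ by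
          rw [real_inner_smul_left, real_inner_smul_left, real_inner_comm]
        simp_rw [hswap, lintegral_exp_inner_stdGaussian, norm_smul, mul_pow, norm_eq_abs, sq_abs,
          ha]
        ring_nf
    _ = ∫⁻ g, ∫⁻ ω, ENNReal.ofReal (exp ⟪a • g, X ω⟫) ∂μ ∂stdGaussian E :=
        lintegral_lintegral_swap (Measurable.aemeasurable (by fun_prop))
    _ ≤ ∫⁻ g, ENNReal.ofReal (exp (2 * l ^ 2 * σ ^ 2 * ‖g‖ ^ 2)) ∂stdGaussian E := by
        refine lintegral_mono fun g ↦ (hmgf (a • g)).trans_eq ?_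
        rw [norm_smul, mul_pow, norm_eq_abs, sq_abs, ha]
        ring_nf
    _ = ENNReal.ofReal ((√(1 - 4 * l ^ 2 * σ ^ 2))⁻¹ ^ Module.finrank ℝ E) := by
        rw [← ofReal_integral_eq_lintegral_ofReal
          (integrable_exp_mul_sq_norm_stdGaussian (by linarith))
          (ae_of_all _ fun _ ↦ (exp_pos _).le), integral_exp_mul_sq_norm_stdGaussian]
        ring_nf

theorem integral_exp_mul_sq_norm_le (hX : Measurable X) {σ : ℝ}
    (hmgf : ∀ u, ∫ ω, exp ⟪u, X ω⟫ ∂μ ≤ exp (‖u‖ ^ 2 * σ ^ 2))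
    {l : ℝ} (hl0 : l ≠ 0) (hl : 4 * l ^ 2 * σ ^ 2 < 1) :
    ∫ ω, exp (l ^ 2 * ‖X ω‖ ^ 2) ∂μ ≤ (√(1 - 4 * l ^ 2 * σ ^ 2))⁻¹ ^ Module.finrank ℝ E := by
  by_cases hint : Integrable (fun ω ↦ exp (l ^ 2 * ‖X ω‖ ^ 2)) μ
  swap
  · rw [integral_undef hint]
    positivity
  have hmgf_lintegral (u : E) :
      ∫⁻ ω, ENNReal.ofReal (exp ⟪u, X ω⟫) ∂μ ≤ ENNReal.ofReal (exp (‖u‖ ^ 2 * σ ^ 2)) := by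
    rw [← ofReal_integral_eq_lintegral_ofReal
      (integrable_exp_inner_of_integrable_exp_mul_sq_norm hX.aestronglyMeasurable hl0 hint u)
      (ae_of_all _ fun _ ↦ (exp_pos _).le)]
    exact ENNReal.ofReal_le_ofReal (hmgf u)
  rw [integral_eq_lintegral_of_nonneg_ae (ae_of_all _ fun _ ↦ (exp_pos _).le) (by fun_prop)]
  exact ENNReal.toReal_le_of_le_ofReal (by positivity)
    (lintegral_exp_mul_sq_norm_le hX hmgf_lintegral hl)

end SubGaussianVector

lemma sq_mul_sq_le_one_of_abs_le_one_div {l s : ℝ} (hs : 0 < s) (hl : |l| ≤ 1 / s) :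
    l ^ 2 * s ^ 2 ≤ 1 := by
  rw [← sq_abs, ← mul_pow]
  exact pow_le_one₀ (by positivity) ((le_div_iff₀ hs).mp hl)

theorem stmt1_general {d : ℕ} {Ω : Type*} [MeasureSpace Ω] [IsProbabilityMeasure (ℙ : Measure Ω)]
    (X : Ω → EuclideanSpace ℝ (Fin d)) (hX : Measurable X)
    (σ' : ℝ)
    (hmgf : ∀ u : EuclideanSpace ℝ (Fin d),
      ∫ ω, Real.exp (inner ℝ u (X ω) : ℝ) ≤ Real.exp (‖u‖ ^ 2 * σ' ^ 2))
    (σbar : ℝ) (hσbar : σbar = 24 * Real.sqrt (Real.exp 1) * σ')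
    (l : ℝ) (hl : |l| ≤ 1 / σbar) :
    ∫ ω, Real.exp (l ^ 2 * ‖X ω‖ ^ 2) ≤ (5 : ℝ) ^ d * Real.exp (l ^ 2 * σbar ^ 2) := by
  rcases eq_or_ne l 0 with rfl | hl0
  · simpa using one_le_pow₀ (by norm_num : (1 : ℝ) ≤ 5)
  have hσbar_pos : 0 < σbar := one_div_pos.mp ((abs_pos.mpr hl0).trans_le hl)
  have hsmall : 4 * l ^ 2 * σ' ^ 2 ≤ 1 / 2 := by
    have h := sq_mul_sq_le_one_of_abs_le_one_div hσbar_pos hl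
    rw [hσbar, mul_pow, mul_pow, sq_sqrt (exp_pos 1).le] at h
    nlinarith [one_le_exp zero_le_one, sq_nonneg (l * σ')]
  have hfactor : (√(1 - 4 * l ^ 2 * σ' ^ 2))⁻¹ ≤ 5 := by
    rw [inv_le_comm₀ (sqrt_pos.mpr (by linarith)) (by norm_num), le_sqrt (by norm_num) (by linarith)]
    linarith
  calc ∫ ω, exp (l ^ 2 * ‖X ω‖ ^ 2)
      ≤ (√(1 - 4 * l ^ 2 * σ' ^ 2))⁻¹ ^ d := by
        simpa using integral_exp_mul_sq_norm_le hX hmgf hl0 (by linarith)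
    _ ≤ 5 ^ d := pow_le_pow_left₀ (by positivity) hfactor d
    _ ≤ 5 ^ d * exp (l ^ 2 * σbar ^ 2) :=
        le_mul_of_one_le_right (by positivity) (one_le_exp (by positivity))

/-- If `X` is a mean-zero random vector in `ℝ^d` with
`E[exp ⟨u, X⟩] ≤ exp (‖u‖² σ'²)` for all `u`, then with `σ̄ := 24 √e σ'`, for all
`|λ| ≤ 1/σ̄` one has `E[exp (λ² ‖X‖²)] ≤ 5^d exp (λ² σ̄²)`. -/
theorem stmt1 {d : ℕ} {Ω : Type*} [MeasureSpace Ω] [IsProbabilityMeasure (ℙ : Measure Ω)]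
    (X : Ω → EuclideanSpace ℝ (Fin d)) (hX : Measurable X)
    (σ' : ℝ) (hσ' : 0 < σ')
    (hmean : ∫ ω, X ω = 0)
    (hmgf : ∀ u : EuclideanSpace ℝ (Fin d),
      ∫ ω, Real.exp (inner ℝ u (X ω) : ℝ) ≤ Real.exp (‖u‖ ^ 2 * σ' ^ 2))
    (σbar : ℝ) (hσbar : σbar = 24 * Real.sqrt (Real.exp 1) * σ')
    (l : ℝ) (hl : |l| ≤ 1 / σbar) :
    ∫ ω, Real.exp (l ^ 2 * ‖X ω‖ ^ 2) ≤ (5 : ℝ) ^ d * Real.exp (l ^ 2 * σbar ^ 2) :=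
  stmt1_general X hX σ' hmgf σbar hσbar l hl
end

section
/- Let F : ℝ^d → ℝ be differentiable with L-Lipschitz gradient (‖∇F(x) − ∇F(y)‖ ≤ L‖x − y‖ for all x, y, with L > 0). Let 1 ≤ r ≤ d, let P ∈ ℝ^{d×r} be any matrix satisfying P^⊤P = (d/r)·I_r, let g ∈ ℝ^d, set η := r/(Ld) and x⁺ := x − η·PP^⊤g. Then (η/2)·‖P^⊤∇F(x)‖² + F(x⁺) − F(x) ≤ (η/2)·‖P^⊤(g − ∇F(x))‖². -/
/-!
The Lipschitz bound on the gradient gives, along the segment from `x` to `x + u`, the descent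
lemma `f (x + u) ≤ f x + ⟪∇f x, u⟫ + L/2 ‖u‖²`. For the step `u = -η P Pᵀ g` one has
`⟪∇F x, u⟫ = -η ⟪Pᵀ∇F x, Pᵀg⟫` and, since `PᵀP = (d/r) I`, `‖u‖² = η² (d/r) ‖Pᵀg‖²`; with
`η = r/(Ld)` the quadratic term is exactly `η/2 ‖Pᵀg‖²`, and completing the square
`‖Pᵀg‖² - 2⟪Pᵀ∇F x, Pᵀg⟫ = ‖Pᵀ(g - ∇F x)‖² - ‖Pᵀ∇F x‖²` gives the claim.
-/

open MeasureTheory Real Matrix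

noncomputable section

def mulVecE {m n : ℕ} (A : Matrix (Fin m) (Fin n) ℝ) (v : EuclideanSpace ℝ (Fin n)) :
    EuclideanSpace ℝ (Fin m) :=
  (EuclideanSpace.equiv (Fin m) ℝ).symm (A.mulVec (EuclideanSpace.equiv (Fin n) ℝ v))

open scoped InnerProductSpace
open Set

section Descent

variable {E : Type*} [NormedAddCommGroup E] [InnerProductSpace ℝ E] [CompleteSpace E]
  {f : E → ℝ}

theorem HasGradientAt.hasDerivAt_comp_add_smul {f' x u : E} {t : ℝ}
    (hf : HasGradientAt f f' (x + t • u)) :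
    HasDerivAt (fun s : ℝ => f (x + s • u)) ⟪f', u⟫_ℝ t := by
  have hline : HasDerivAt (fun s : ℝ => x + s • u) u t := by
    simpa using ((hasDerivAt_id t).smul_const u).const_add x
  simpa [Function.comp_def] using hf.hasFDerivAt.comp_hasDerivAt t hline

theorem le_add_inner_gradient_add_norm_sq (hf : Differentiable ℝ f) {L : ℝ}
    (hLip : ∀ x y, ‖gradient f x - gradient f y‖ ≤ L * ‖x - y‖) (x u : E) :
    f (x + u) ≤ f x + ⟪gradient f x, u⟫_ℝ + L / 2 * ‖u‖ ^ 2 := by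
  have hderiv (t : ℝ) : HasDerivAt (fun s : ℝ => f (x + s • u)) ⟪gradient f (x + t • u), u⟫_ℝ t :=
    (hf _).hasGradientAt.hasDerivAt_comp_add_smul
  have hbound : ∀ t ∈ Ico (0 : ℝ) 1,
      ⟪gradient f (x + t • u), u⟫_ℝ ≤ ⟪gradient f x, u⟫_ℝ + L * t * ‖u‖ ^ 2 := by
    rintro t ⟨ht, -⟩
    have := calc ⟪gradient f (x + t • u) - gradient f x, u⟫_ℝ
        _ ≤ ‖gradient f (x + t • u) - gradient f x‖ * ‖u‖ := real_inner_le_norm _ _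
        _ ≤ L * ‖x + t • u - x‖ * ‖u‖ := by gcongr; exact hLip _ _
        _ = L * t * ‖u‖ ^ 2 := by
          rw [add_sub_cancel_left, norm_smul, Real.norm_of_nonneg ht]; ring
    rwa [inner_sub_left, sub_le_iff_le_add'] at this
  have hquad (t : ℝ) :
      HasDerivAt (fun s : ℝ => f x + s * ⟪gradient f x, u⟫_ℝ + L / 2 * ‖u‖ ^ 2 * s ^ 2)
        (⟪gradient f x, u⟫_ℝ + L * t * ‖u‖ ^ 2) t :=
    ((((hasDerivAt_id' t).mul_const _).const_add (f x)).add
      ((hasDerivAt_pow 2 t).const_mul (L / 2 * ‖u‖ ^ 2))).congr_deriv (by ring)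
  have := image_le_of_deriv_right_le_deriv_boundary
    (fun t _ => (hderiv t).continuousAt.continuousWithinAt) (fun t _ => (hderiv t).hasDerivWithinAt)
    (by simp) (fun t _ => (hquad t).continuousAt.continuousWithinAt)
    (fun t _ => (hquad t).hasDerivWithinAt) hbound (right_mem_Icc.2 zero_le_one)
  simpa using this

theorem sketched_gradient_step_le {G : Type*} [NormedAddCommGroup G] [InnerProductSpace ℝ G]
    (hf : Differentiable ℝ f) {L : ℝ}
    (hLip : ∀ x y, ‖gradient f x - gradient f y‖ ≤ L * ‖x - y‖)
    (T : E →ₗ[ℝ] G) (S : G → E) (hadj : ∀ v w, ⟪T v, w⟫_ℝ = ⟪v, S w⟫_ℝ)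
    {c : ℝ} (hTS : ∀ w, T (S w) = c • w) {η : ℝ} (hη : η = (L * c)⁻¹) (g x : E) :
    η / 2 * ‖T (gradient f x)‖ ^ 2 + f (x - η • S (T g)) - f x ≤
      η / 2 * ‖T (g - gradient f x)‖ ^ 2 := by
  set a := T (gradient f x)
  set b := T g
  have hdesc := le_add_inner_gradient_add_norm_sq hf hLip x (-(η • S b))
  have hinner : ⟪gradient f x, S b⟫_ℝ = ⟪a, b⟫_ℝ := (hadj _ _).symm
  have hnorm : ‖S b‖ ^ 2 = c * ‖b‖ ^ 2 := by
    rw [← real_inner_self_eq_norm_sq, ← hadj, hTS, real_inner_smul_left, real_inner_self_eq_norm_sq]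
  -- `η = (L c)⁻¹` gives `L c η² = η` also when `L c = 0`, where both sides vanish
  have hstep : L * c * η * η = η := by
    rw [hη]; simpa only [inv_inv] using inv_mul_mul_self (L * c)⁻¹
  rw [← sub_eq_add_neg, inner_neg_right, inner_smul_right, hinner, norm_neg, norm_smul,
    mul_pow, Real.norm_eq_abs, sq_abs, hnorm] at hdesc
  rw [map_sub, norm_sub_sq_real, real_inner_comm]
  nlinarith [hstep]

end Descent

theorem mulVecE_mul {l m n : ℕ} (A : Matrix (Fin l) (Fin m) ℝ) (B : Matrix (Fin m) (Fin n) ℝ)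
    (v : EuclideanSpace ℝ (Fin n)) : mulVecE (A * B) v = mulVecE A (mulVecE B v) := by
  unfold mulVecE; rw [← Matrix.mulVec_mulVec]; rfl

theorem inner_mulVecE_transpose_left {m n : ℕ} (A : Matrix (Fin m) (Fin n) ℝ)
    (v : EuclideanSpace ℝ (Fin m)) (w : EuclideanSpace ℝ (Fin n)) :
    ⟪mulVecE Aᵀ v, w⟫_ℝ = ⟪v, mulVecE A w⟫_ℝ := by
  have h := Matrix.toEuclideanLin_conjTranspose_eq_adjoint A
  rw [conjTranspose_eq_transpose_of_trivial] at h
  exact (congrArg (fun T => ⟪T v, w⟫_ℝ) h).trans (LinearMap.adjoint_inner_left _ w v)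

theorem stmt4_general {d r : ℕ}
    (F : EuclideanSpace ℝ (Fin d) → ℝ) (hdiff : Differentiable ℝ F)
    (L : ℝ)
    (hLip : ∀ x y, ‖gradient F x - gradient F y‖ ≤ L * ‖x - y‖)
    (P : Matrix (Fin d) (Fin r) ℝ)
    (hP : Pᵀ * P = ((d : ℝ) / r) • (1 : Matrix (Fin r) (Fin r) ℝ))
    (g x : EuclideanSpace ℝ (Fin d)) (η : ℝ) (hη : η = r / (L * d)) :
    η / 2 * ‖mulVecE Pᵀ (gradient F x)‖ ^ 2
        + F (x - η • mulVecE (P * Pᵀ) g) - F x ≤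
      η / 2 * ‖mulVecE Pᵀ (g - gradient F x)‖ ^ 2 := by
  have hTS (w : EuclideanSpace ℝ (Fin r)) : mulVecE Pᵀ (mulVecE P w) = ((d : ℝ) / r) • w := by
    rw [← mulVecE_mul, hP]; unfold mulVecE; rw [Matrix.smul_mulVec, Matrix.one_mulVec]; rfl
  rw [mulVecE_mul]
  exact sketched_gradient_step_le hdiff hLip (Matrix.toEuclideanLin Pᵀ) (mulVecE P)
    (inner_mulVecE_transpose_left P) hTS (by rw [hη, mul_inv, inv_div]; ring) g x

/-- One-step descent inequality for the projected SGD update with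
stepsize `η = r/(Ld)`: for any matrix `P` with `PᵀP = (d/r) I_r` and any `g`,
`(η/2) ‖Pᵀ∇F(x)‖² + F(x⁺) − F(x) ≤ (η/2) ‖Pᵀ(g − ∇F(x))‖²` where
`x⁺ = x − η P Pᵀ g`. -/
theorem stmt4 {d r : ℕ} (hr : 1 ≤ r) (hrd : r ≤ d)
    (F : EuclideanSpace ℝ (Fin d) → ℝ) (hdiff : Differentiable ℝ F)
    (L : ℝ) (hL : 0 < L)
    (hLip : ∀ x y, ‖gradient F x - gradient F y‖ ≤ L * ‖x - y‖)
    (P : Matrix (Fin d) (Fin r) ℝ)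
    (hP : Pᵀ * P = ((d : ℝ) / r) • (1 : Matrix (Fin r) (Fin r) ℝ))
    (g x : EuclideanSpace ℝ (Fin d)) (η : ℝ) (hη : η = r / (L * d)) :
    η / 2 * ‖mulVecE Pᵀ (gradient F x)‖ ^ 2
        + F (x - η • mulVecE (P * Pᵀ) g) - F x ≤
      η / 2 * ‖mulVecE Pᵀ (g - gradient F x)‖ ^ 2 :=
  stmt4_general F hdiff L hLip P hP g x η hη

end
end

section
/- Let (Ω, ℱ, P) be a probability space with a filtration (ℱ_k)_{k=0}^{T}, let T ≥ 1 be an integer, and let A_0, …, A_{T−1} be events with A_k ∈ ℱ_{k+1}. Set p_k := P(A_k | ℱ_k), and suppose there is μ ∈ (0, 1] such that Σ_{k=0}^{T−1} p_k ≥ μT almost surely. Let X := Σ_{k=0}^{T−1} 1_{A_k}. Then for every s ∈ (0, 1), P(X ≤ (1−s)·μT) ≤ exp(−(s²/2)·μT). -/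
/-!
With `p_k = E[1_{A_k} | ℱ_k]`, the process `M_n = ∏_{k<n} e^{s p_k} (1 - s 1_{A_k})` is a
nonnegative supermartingale with `M_0 = 1`: conditioning on `ℱ_k` turns the new factor into
`e^{s p_k} (1 - s p_k) ≤ 1`. Since `1 - s 1_A = (1 - s)^{1_A}`, we have
`M_T = exp (s ∑ p_k + log (1 - s) X)`, so on the event `X ≤ (1 - s) μT` (where `∑ p_k ≥ μT`)
`M_T ≥ exp (s μT + (1 - s) log (1 - s) μT)`. Markov's inequality and
`s + (1 - s) log (1 - s) ≥ s² / 2` finish the proof.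
-/

open MeasureTheory Real Finset

theorem abs_le_one_of_mem_Icc {a : ℝ} (ha : a ∈ Set.Icc (0 : ℝ) 1) : |a| ≤ 1 :=
  abs_le.2 ⟨by linarith [ha.1], ha.2⟩

theorem abs_exp_mul_mul_one_sub_le {s p y : ℝ} (hp : |p| ≤ 1) (hy : |y| ≤ 1) :
    |exp (s * p) * (1 - s * y)| ≤ exp |s| * (1 + |s|) := by
  rw [abs_mul, abs_exp]
  have hsp : s * p ≤ |s| := by
    calc s * p ≤ |s * p| := le_abs_self _
      _ ≤ |s| := by rw [abs_mul]; exact mul_le_of_le_one_right (abs_nonneg s) hp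
  have hsy : |1 - s * y| ≤ 1 + |s| := by
    calc |1 - s * y| ≤ |1| + |s * y| := abs_sub _ _
      _ ≤ 1 + |s| := by
        rw [abs_one, abs_mul]; gcongr; exact mul_le_of_le_one_right (abs_nonneg s) hy
  exact mul_le_mul (exp_le_exp.2 hsp) hsy (abs_nonneg _) (exp_pos _).le

theorem exp_mul_one_sub_le_one (x : ℝ) : exp x * (1 - x) ≤ 1 :=
  calc exp x * (1 - x) ≤ exp x * exp (-x) :=
        mul_le_mul_of_nonneg_left (one_sub_le_exp_neg x) (exp_pos x).le
    _ = 1 := by rw [← exp_add, add_neg_cancel, exp_zero]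

theorem sq_div_two_le_add_one_sub_mul_log_one_sub {s : ℝ} (hs0 : 0 ≤ s) (hs1 : s < 1) :
    s ^ 2 / 2 ≤ s + (1 - s) * log (1 - s) := by
  set f : ℝ → ℝ := fun y => y + (1 - y) * log (1 - y) - y ^ 2 / 2
  have hf (x : ℝ) (hx : x < 1) : HasDerivAt f (-log (1 - x) - x) x := by
    have hu : HasDerivAt (fun y : ℝ => 1 - y) (-1) x := (hasDerivAt_id x).const_sub 1
    have hl := (hasDerivAt_log (sub_pos.2 hx).ne').comp x hu
    refine (((hasDerivAt_id x).add (hu.mul hl)).sub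
      ((hasDerivAt_pow 2 x).div_const 2)).congr_deriv ?_
    rw [mul_inv_cancel_left₀ (sub_pos.2 hx).ne']
    simp only [Function.comp_apply]
    ring
  have hmono : MonotoneOn f (Set.Icc 0 s) := by
    refine monotoneOn_of_deriv_nonneg (convex_Icc 0 s)
      (fun x hx => (hf x (by linarith [hx.2])).continuousAt.continuousWithinAt)
      (fun x hx => (hf x ?_).differentiableAt.differentiableWithinAt) fun x hx => ?_
    all_goals rw [interior_Icc] at hx
    · linarith [hx.2]
    · rw [(hf x (by linarith [hx.2])).deriv]
      linarith [log_le_sub_one_of_pos (show 0 < 1 - x by linarith [hx.2])]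
  have := hmono (Set.left_mem_Icc.2 hs0) (Set.right_mem_Icc.2 hs0) hs0
  simp only [f, sub_zero, log_one, mul_zero, add_zero] at this
  linarith

section

variable {Ω : Type*} {m m0 : MeasurableSpace Ω} {μ : Measure Ω}

theorem condExp_mem_Icc_ae [IsFiniteMeasure μ] (hm : m ≤ m0) {f : Ω → ℝ} {a b : ℝ}
    (hf_int : Integrable f μ) (hf : ∀ᵐ ω ∂μ, f ω ∈ Set.Icc a b) :
    ∀ᵐ ω ∂μ, μ[f | m] ω ∈ Set.Icc a b := by
  have hlow : μ[fun _ => a | m] ≤ᵐ[μ] μ[f | m] :=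
    condExp_mono (integrable_const a) hf_int (hf.mono fun _ h => h.1)
  have hup : μ[f | m] ≤ᵐ[μ] μ[fun _ => b | m] :=
    condExp_mono hf_int (integrable_const b) (hf.mono fun _ h => h.2)
  rw [condExp_const hm] at hlow hup
  filter_upwards [hlow, hup] with ω using And.intro

theorem integral_mul_condExp_of_stronglyMeasurable_left (hm : m ≤ m0)
    [SigmaFinite (μ.trim hm)] {f g : Ω → ℝ} (hf : StronglyMeasurable[m] f)
    (hfg : Integrable (fun ω => f ω * g ω) μ) (hg : Integrable g μ) :
    ∫ ω, f ω * g ω ∂μ = ∫ ω, f ω * μ[g | m] ω ∂μ := by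
  rw [← integral_condExp hm]
  exact integral_congr_ae (condExp_mul_of_stronglyMeasurable_left hf hfg hg)

theorem MeasureTheory.Integrable.mul_exp_mul_mul_one_sub {G p y : Ω → ℝ} (hG : Integrable G μ)
    (s : ℝ) (hp_meas : AEStronglyMeasurable p μ) (hy_meas : AEStronglyMeasurable y μ)
    (hp : ∀ᵐ ω ∂μ, |p ω| ≤ 1) (hy : ∀ᵐ ω ∂μ, |y ω| ≤ 1) :
    Integrable (fun ω => G ω * (exp (s * p ω) * (1 - s * y ω))) μ := by
  refine (hG.bdd_mul (c := exp |s| * (1 + |s|)) ?_ ?_).congr (ae_of_all μ fun ω => mul_comm _ _)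
  · exact (continuous_exp.comp_aestronglyMeasurable (hp_meas.const_mul s)).mul
      (aestronglyMeasurable_const.sub (hy_meas.const_mul s))
  · filter_upwards [hp, hy] with ω hpω hyω
    exact abs_exp_mul_mul_one_sub_le hpω hyω

theorem MeasureTheory.Integrable.mul_exp_condExp_mul_one_sub [IsFiniteMeasure μ] (hm : m ≤ m0)
    {G Y : Ω → ℝ} (hG : Integrable G μ) (s : ℝ) (hY_int : Integrable Y μ)
    (hY : ∀ ω, Y ω ∈ Set.Icc 0 1) :
    Integrable (fun ω => G ω * (exp (s * μ[Y | m] ω) * (1 - s * Y ω))) μ :=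
  hG.mul_exp_mul_mul_one_sub s (stronglyMeasurable_condExp.mono hm).aestronglyMeasurable
    hY_int.aestronglyMeasurable
    ((condExp_mem_Icc_ae hm hY_int (ae_of_all μ hY)).mono fun _ => abs_le_one_of_mem_Icc)
    (ae_of_all μ fun ω => abs_le_one_of_mem_Icc (hY ω))

theorem integral_mul_exp_condExp_mul_one_sub_le [IsFiniteMeasure μ] (hm : m ≤ m0)
    {G Y : Ω → ℝ} (s : ℝ) (hG : StronglyMeasurable[m] G) (hG_int : Integrable G μ)
    (hG_nonneg : ∀ ω, 0 ≤ G ω) (hY_int : Integrable Y μ) (hY : ∀ ω, Y ω ∈ Set.Icc 0 1) :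
    ∫ ω, G ω * (exp (s * μ[Y | m] ω) * (1 - s * Y ω)) ∂μ ≤ ∫ ω, G ω ∂μ := by
  set p := μ[Y | m]
  have hp : ∀ᵐ ω ∂μ, |p ω| ≤ 1 :=
    (condExp_mem_Icc_ae hm hY_int (ae_of_all μ hY)).mono fun _ => abs_le_one_of_mem_Icc
  have hp_meas : AEStronglyMeasurable p μ :=
    (stronglyMeasurable_condExp.mono hm).aestronglyMeasurable
  have hW_int : Integrable (fun ω => 1 - s * Y ω) μ := (integrable_const 1).sub (hY_int.const_mul s)
  have hW : μ[fun ω => 1 - s * Y ω | m] =ᵐ[μ] fun ω => 1 - s * p ω := by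
    filter_upwards [condExp_sub (integrable_const 1) (hY_int.smul s) m,
      condExp_smul (m := m) (μ := μ) s Y] with ω h_sub h_smul
    change μ[(fun _ => (1 : ℝ)) - s • Y | m] ω = 1 - s * p ω
    rw [h_sub, Pi.sub_apply, condExp_const hm, h_smul]
    rfl
  have hGe : StronglyMeasurable[m] fun ω => G ω * exp (s * p ω) :=
    hG.mul (continuous_exp.comp_stronglyMeasurable (stronglyMeasurable_condExp.const_mul s))
  have hGeW_int : Integrable (fun ω => G ω * exp (s * p ω) * (1 - s * Y ω)) μ := by
    simpa only [mul_assoc] using hG_int.mul_exp_condExp_mul_one_sub hm s hY_int hY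
  calc ∫ ω, G ω * (exp (s * p ω) * (1 - s * Y ω)) ∂μ
      = ∫ ω, G ω * exp (s * p ω) * (1 - s * Y ω) ∂μ := by simp only [mul_assoc]
    _ = ∫ ω, G ω * exp (s * p ω) * μ[fun ω => 1 - s * Y ω | m] ω ∂μ :=
        integral_mul_condExp_of_stronglyMeasurable_left hm hGe hGeW_int hW_int
    _ = ∫ ω, G ω * (exp (s * p ω) * (1 - s * p ω)) ∂μ := by
        refine integral_congr_ae ?_
        filter_upwards [hW] with ω hω
        rw [hω, mul_assoc]
    _ ≤ ∫ ω, G ω ∂μ :=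
        integral_mono_ae (hG_int.mul_exp_mul_mul_one_sub s hp_meas hp_meas hp hp) hG_int
          (ae_of_all μ fun ω => mul_le_of_le_one_right (hG_nonneg ω) (exp_mul_one_sub_le_one _))

variable (μ) in
noncomputable def expCompensatedProd (ℱ : Filtration ℕ m0) (Y : ℕ → Ω → ℝ) (s : ℝ) (n : ℕ) :
    Ω → ℝ :=
  fun ω => ∏ k ∈ range n, exp (s * μ[Y k | ℱ k] ω) * (1 - s * Y k ω)

variable {ℱ : Filtration ℕ m0} {Y : ℕ → Ω → ℝ} {s : ℝ}

theorem expCompensatedProd_succ (n : ℕ) :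
    expCompensatedProd μ ℱ Y s (n + 1) = fun ω =>
      expCompensatedProd μ ℱ Y s n ω * (exp (s * μ[Y n | ℱ n] ω) * (1 - s * Y n ω)) :=
  funext fun _ => prod_range_succ _ n

theorem expCompensatedProd_nonneg (hY : ∀ k ω, Y k ω ∈ Set.Icc 0 1) (hs : s ≤ 1) (n : ℕ)
    (ω : Ω) : 0 ≤ expCompensatedProd μ ℱ Y s n ω :=
  prod_nonneg fun k _ => mul_nonneg (exp_pos _).le <| by
    nlinarith [(hY k ω).1, (hY k ω).2, mul_nonneg (hY k ω).1 (sub_nonneg.2 hs)]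

theorem stronglyMeasurable_expCompensatedProd
    (hY_meas : ∀ k, StronglyMeasurable[ℱ (k + 1)] (Y k)) (n : ℕ) :
    StronglyMeasurable[ℱ n] (expCompensatedProd μ ℱ Y s n) := by
  refine Finset.stronglyMeasurable_fun_prod _ fun k hk => ?_
  have hkn : k + 1 ≤ n := mem_range.1 hk
  exact (continuous_exp.comp_stronglyMeasurable
    ((stronglyMeasurable_condExp.mono (ℱ.mono (by omega))).const_mul s)).mul
    (stronglyMeasurable_const.sub (((hY_meas k).mono (ℱ.mono hkn)).const_mul s))

theorem integrable_expCompensatedProd_and_integral_le_one [IsProbabilityMeasure μ]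
    (hY_meas : ∀ k, StronglyMeasurable[ℱ (k + 1)] (Y k)) (hY : ∀ k ω, Y k ω ∈ Set.Icc 0 1)
    (hs : s ≤ 1) (n : ℕ) :
    Integrable (expCompensatedProd μ ℱ Y s n) μ ∧ ∫ ω, expCompensatedProd μ ℱ Y s n ω ∂μ ≤ 1 := by
  have hY_int (k : ℕ) : Integrable (Y k) μ :=
    .of_bound ((hY_meas k).mono (ℱ.le _)).aestronglyMeasurable 1
      (ae_of_all μ fun ω => abs_le_one_of_mem_Icc (hY k ω))
  induction n with
  | zero =>
    have h0 : expCompensatedProd μ ℱ Y s 0 = fun _ => 1 := funext fun _ => prod_range_zero _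
    simp [h0]
  | succ n ih =>
    rw [expCompensatedProd_succ]
    exact ⟨ih.1.mul_exp_condExp_mul_one_sub (ℱ.le n) s (hY_int n) (hY n),
      (integral_mul_exp_condExp_mul_one_sub_le (ℱ.le n) s
        (stronglyMeasurable_expCompensatedProd hY_meas n) ih.1
        (expCompensatedProd_nonneg hY hs n) (hY_int n) (hY n)).trans ih.2⟩

end

theorem indicator_one_mem_Icc {Ω : Type*} (A : Set Ω) (ω : Ω) :
    A.indicator (fun _ => (1 : ℝ)) ω ∈ Set.Icc 0 1 := by
  by_cases h : ω ∈ A <;> simp [h]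

theorem one_sub_mul_indicator_one_eq_exp {Ω : Type*} {s : ℝ} (hs : s < 1) (A : Set Ω) (ω : Ω) :
    1 - s * A.indicator (fun _ => (1 : ℝ)) ω = exp (log (1 - s) * A.indicator (fun _ => 1) ω) := by
  by_cases h : ω ∈ A <;> simp [h, exp_log (sub_pos.2 hs)]

theorem expCompensatedProd_indicator_eq_exp {Ω : Type*} {m0 : MeasurableSpace Ω} (μ : Measure Ω)
    (ℱ : Filtration ℕ m0) (A : ℕ → Set Ω) {s : ℝ} (hs : s < 1) (n : ℕ) (ω : Ω) :
    expCompensatedProd μ ℱ (fun k => (A k).indicator fun _ => 1) s n ω =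
      exp (s * ∑ k ∈ range n, μ[(A k).indicator (fun _ => (1 : ℝ)) | ℱ k] ω +
        log (1 - s) * ∑ k ∈ range n, (A k).indicator (fun _ => (1 : ℝ)) ω) := by
  simp only [expCompensatedProd, one_sub_mul_indicator_one_eq_exp hs, prod_mul_distrib,
    ← exp_sum, mul_sum, exp_add]

theorem stmt5_general {Ω : Type*} {m0 : MeasurableSpace Ω} (Pr : Measure Ω) [IsProbabilityMeasure Pr]
    (ℱ : Filtration ℕ m0) (T : ℕ)
    (A : ℕ → Set Ω) (hA : ∀ k, MeasurableSet[ℱ (k + 1)] (A k))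
    (μ : ℝ) (hμ : μ ∈ Set.Ioc (0 : ℝ) 1)
    (hsum : ∀ᵐ ω ∂Pr,
      μ * T ≤ ∑ k ∈ Finset.range T, (Pr[(A k).indicator (fun _ => (1 : ℝ)) | ℱ k]) ω)
    (s : ℝ) (hs : s ∈ Set.Ioo (0 : ℝ) 1) :
    Pr {ω | (∑ k ∈ Finset.range T, (A k).indicator (fun _ => (1 : ℝ)) ω) ≤ (1 - s) * (μ * T)}
      ≤ ENNReal.ofReal (Real.exp (-(s ^ 2 / 2) * (μ * T))) := by
  obtain ⟨hs0, hs1⟩ := hs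
  set M := expCompensatedProd Pr ℱ (fun k => (A k).indicator fun _ => 1) s T
  obtain ⟨hM_int, hM_le⟩ := integrable_expCompensatedProd_and_integral_le_one (μ := Pr)
    (fun k => stronglyMeasurable_const.indicator (hA k)) (fun k => indicator_one_mem_Icc (A k))
    hs1.le T
  set B := exp (s * (μ * T) + log (1 - s) * ((1 - s) * (μ * T)))
  have hlog_neg : log (1 - s) < 0 := log_neg (by linarith) (by linarith)
  have hsub : {ω | ∑ k ∈ range T, (A k).indicator (fun _ => (1 : ℝ)) ω ≤ (1 - s) * (μ * T)}
      ≤ᵐ[Pr] {ω | B ≤ M ω} := by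
    filter_upwards [hsum] with ω hω hX
    change B ≤ expCompensatedProd _ _ _ _ _ ω
    rw [expCompensatedProd_indicator_eq_exp Pr ℱ A hs1]
    exact exp_le_exp.2 (add_le_add (mul_le_mul_of_nonneg_left hω hs0.le)
      (mul_le_mul_of_nonpos_left hX hlog_neg.le))
  have hmarkov : B * Pr.real {ω | B ≤ M ω} ≤ 1 :=
    (mul_meas_ge_le_integral_of_nonneg (ae_of_all _ (expCompensatedProd_nonneg
      (fun k => indicator_one_mem_Icc (A k)) hs1.le T)) hM_int B).trans hM_le
  have hμT : 0 ≤ μ * T := mul_nonneg hμ.1.le T.cast_nonneg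
  calc _ ≤ Pr {ω | B ≤ M ω} := measure_mono_ae hsub
    _ = ENNReal.ofReal (Pr.real {ω | B ≤ M ω}) := (ofReal_measureReal).symm
    _ ≤ ENNReal.ofReal (exp (-(s * (μ * T) + log (1 - s) * ((1 - s) * (μ * T))))) := by
        refine ENNReal.ofReal_le_ofReal ?_
        rw [exp_neg, ← one_div, le_div_iff₀ (exp_pos _)]
        linarith
    _ ≤ _ := ENNReal.ofReal_le_ofReal <| exp_le_exp.2 <| by
        nlinarith [sq_div_two_le_add_one_sub_mul_log_one_sub hs0.le hs1]

/-- A Chernoff-type bound for sums of adapted indicators: if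
`A_k ∈ ℱ_{k+1}`, `p_k = Pr(A_k | ℱ_k)` and `∑_{k<T} p_k ≥ μT` a.s. for some `μ ∈ (0,1]`,
then `X = ∑_{k<T} 1_{A_k}` satisfies `Pr(X ≤ (1−s) μT) ≤ exp(−(s²/2) μT)` for `s ∈ (0,1)`. -/
theorem stmt5 {Ω : Type*} {m0 : MeasurableSpace Ω} (Pr : Measure Ω) [IsProbabilityMeasure Pr]
    (ℱ : Filtration ℕ m0) (T : ℕ) (hT : 1 ≤ T)
    (A : ℕ → Set Ω) (hA : ∀ k, MeasurableSet[ℱ (k + 1)] (A k))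
    (μ : ℝ) (hμ : μ ∈ Set.Ioc (0 : ℝ) 1)
    (hsum : ∀ᵐ ω ∂Pr,
      μ * T ≤ ∑ k ∈ Finset.range T, (Pr[(A k).indicator (fun _ => (1 : ℝ)) | ℱ k]) ω)
    (s : ℝ) (hs : s ∈ Set.Ioo (0 : ℝ) 1) :
    Pr {ω | (∑ k ∈ Finset.range T, (A k).indicator (fun _ => (1 : ℝ)) ω) ≤ (1 - s) * (μ * T)}
      ≤ ENNReal.ofReal (Real.exp (-(s ^ 2 / 2) * (μ * T))) :=
  stmt5_general Pr ℱ T A hA μ hμ hsum s hs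
end

section
/- Let r and d be integers with 1 ≤ r < d, and let Z be a random variable with the Beta(r/2, (d−r)/2) distribution, i.e., with density y^{r/2−1}(1−y)^{(d−r)/2−1}/B(r/2, (d−r)/2) on (0,1). Then P(Z ≥ r/(2d)) ≥ 1/12. Equivalently, the regularized incomplete Beta function satisfies 1 − I_{r/(2d)}(r/2, (d−r)/2) ≥ 1/12. -/
open MeasureTheory ProbabilityTheory Real

noncomputable section

/-- The regularized incomplete Beta function I_x(a,b). -/
def regIncBeta (a b x : ℝ) : ℝ :=
  (∫ y in (0:ℝ)..x, y ^ (a - 1) * (1 - y) ^ (b - 1)) /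
    (Real.Gamma a * Real.Gamma b / Real.Gamma (a + b))

open Set

/-! Write `m = 𝔼[Z] = r / d`. Since `𝔼[Z²] = m (r + 2) / (d + 2) ≤ 3 m²` as soon as `r ≥ 1`,
Markov's inequality for `(Z - 7m/2)²`, which is at least `9 m²` on `{Z < m/2}`, gives
`ℙ(Z < m/2) ≤ (𝔼[Z²] - 7 m² + 49 m² / 4) / (9 m²) ≤ 11/12`.
Both moments come from the identity `x · f_{a,b}(x) = a/(a+b) · f_{a+1,b}(x)` for Beta densities. -/

section SecondMoment

variable {Ω : Type*} {mΩ : MeasurableSpace Ω} {μ : Measure Ω} {X : Ω → ℝ}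

lemma measureReal_lt_le_integral_sub_sq_div [IsFiniteMeasure μ] (hX : MemLp X 2 μ)
    {t s : ℝ} (hts : t < s) :
    μ.real {ω | X ω < t} ≤ (∫ ω, (X ω - s) ^ 2 ∂μ) / (s - t) ^ 2 := by
  have hint : Integrable (fun ω => (X ω - s) ^ 2) μ := (hX.sub (memLp_const s)).integrable_sq
  have markov := mul_meas_ge_le_integral_of_nonneg (ae_of_all _ fun ω => sq_nonneg _) hint
    ((s - t) ^ 2)
  rw [le_div_iff₀ (by nlinarith), mul_comm]
  refine le_trans (mul_le_mul_of_nonneg_left (measureReal_mono fun ω hω => ?_) (sq_nonneg _))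
    markov
  have : X ω < t := hω
  show (s - t) ^ 2 ≤ (X ω - s) ^ 2
  nlinarith

lemma integral_sub_const_sq [IsProbabilityMeasure μ] (hX : MemLp X 2 μ) (s : ℝ) :
    ∫ ω, (X ω - s) ^ 2 ∂μ = ∫ ω, X ω ^ 2 ∂μ - 2 * s * ∫ ω, X ω ∂μ + s ^ 2 := by
  have h2 : Integrable (fun ω => X ω ^ 2) μ := hX.integrable_sq
  have h1 : Integrable X μ := hX.integrable one_le_two
  have h1' : Integrable (fun ω => 2 * X ω * s) μ := (h1.const_mul 2).mul_const s
  have h21 : Integrable (fun ω => X ω ^ 2 - 2 * X ω * s) μ := h2.sub h1'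
  simp_rw [sub_sq]
  rw [integral_add h21 (integrable_const _), integral_sub h2 h1', integral_mul_const,
    integral_const_mul, integral_const, probReal_univ, one_smul]
  ring

lemma measureReal_lt_half_integral_le [IsProbabilityMeasure μ] (hX : MemLp X 2 μ)
    (hm : 0 < ∫ ω, X ω ∂μ) (h2 : ∫ ω, X ω ^ 2 ∂μ ≤ 3 * (∫ ω, X ω ∂μ) ^ 2) :
    μ.real {ω | X ω < (∫ ω, X ω ∂μ) / 2} ≤ 11 / 12 := by
  set m := ∫ ω, X ω ∂μ
  calc μ.real {ω | X ω < m / 2}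
      ≤ (∫ ω, (X ω - 7 * m / 2) ^ 2 ∂μ) / (7 * m / 2 - m / 2) ^ 2 :=
        measureReal_lt_le_integral_sub_sq_div hX (by linarith)
    _ ≤ 11 / 12 := by
        rw [integral_sub_const_sq hX, div_le_iff₀ (by nlinarith)]
        nlinarith

lemma ofReal_one_sub_le_measure_setOf_le {ν : Measure ℝ} [IsProbabilityMeasure ν]
    (hX : μ.map X = ν) {x c : ℝ} (h : ν.real (Iio x) ≤ c) :
    ENNReal.ofReal (1 - c) ≤ μ {ω | x ≤ X ω} := by
  have hXm : AEMeasurable X μ :=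
    .of_map_ne_zero (by rw [hX]; exact IsProbabilityMeasure.ne_zero _)
  rw [show {ω | x ≤ X ω} = X ⁻¹' Ici x from rfl,
    ← Measure.map_apply_of_aemeasurable hXm measurableSet_Ici, hX, ← compl_Iio,
    ← ofReal_measureReal (measure_ne_top _ _), probReal_compl_eq_one_sub measurableSet_Iio]
  exact ENNReal.ofReal_le_ofReal (by linarith)

end SecondMoment

section Beta

variable {a b : ℝ}

lemma betaPDFReal_eq_indicator (a b : ℝ) :
    betaPDFReal a b =
      (Ioo 0 1).indicator fun x => x ^ (a - 1) * (1 - x) ^ (b - 1) / beta a b := by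
  ext x
  simp only [betaPDFReal, indicator, mem_Ioo]
  split_ifs <;> ring

lemma betaPDF_eq_indicator (a b : ℝ) :
    betaPDF a b =
      (Ioo 0 1).indicator fun x => ENNReal.ofReal (x ^ (a - 1) * (1 - x) ^ (b - 1) / beta a b) := by
  ext x
  rw [betaPDF, betaPDFReal_eq_indicator]
  by_cases hx : x ∈ Ioo (0 : ℝ) 1 <;> simp [hx]

lemma withDensity_restrict_Ioo_eq_betaMeasure (a b : ℝ) :
    (volume.restrict (Ioo 0 1)).withDensity
        (fun x => ENNReal.ofReal (x ^ (a - 1) * (1 - x) ^ (b - 1) / beta a b)) =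
      betaMeasure a b := by
  rw [betaMeasure, betaPDF_eq_indicator, withDensity_indicator measurableSet_Ioo]

lemma ae_betaMeasure_mem_Ioo (a b : ℝ) : ∀ᵐ x ∂betaMeasure a b, x ∈ Ioo 0 1 := by
  rw [← withDensity_restrict_Ioo_eq_betaMeasure]
  exact withDensity_absolutelyContinuous _ _ (ae_restrict_mem measurableSet_Ioo)

lemma beta_add_one_left (ha : 0 < a) (hb : 0 < b) : beta (a + 1) b = a / (a + b) * beta a b := by
  rw [beta, beta, add_right_comm, Real.Gamma_add_one ha.ne', Real.Gamma_add_one (by positivity)]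
  have := Real.Gamma_pos_of_pos (add_pos ha hb)
  field_simp

lemma id_mul_betaPDFReal (ha : 0 < a) (hb : 0 < b) (x : ℝ) :
    x * betaPDFReal a b x = a / (a + b) * betaPDFReal (a + 1) b x := by
  simp only [betaPDFReal_eq_indicator, indicator]
  split_ifs with hx
  · rw [beta_add_one_left ha hb, add_sub_cancel_right, Real.rpow_sub_one hx.1.ne']
    have := beta_pos ha hb
    have := hx.1.ne'
    field_simp
  · simp

lemma betaPDFReal_nonneg (ha : 0 < a) (hb : 0 < b) (x : ℝ) : 0 ≤ betaPDFReal a b x := by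
  rw [betaPDFReal_eq_indicator]
  refine indicator_nonneg (fun y hy => ?_) x
  have := beta_pos ha hb
  have := hy.1
  have : 0 < 1 - y := sub_pos.2 hy.2
  positivity

lemma integral_betaMeasure (ha : 0 < a) (hb : 0 < b) (g : ℝ → ℝ) :
    ∫ x, g x ∂betaMeasure a b = ∫ x, betaPDFReal a b x * g x := by
  rw [betaMeasure, integral_withDensity_eq_integral_toReal_smul (f := betaPDF a b)
    (measurable_betaPDFReal a b).ennreal_ofReal (ae_of_all _ fun _ => ENNReal.ofReal_lt_top)]
  congr with x
  rw [betaPDF, ENNReal.toReal_ofReal (betaPDFReal_nonneg ha hb x), smul_eq_mul]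

lemma integral_id_mul_betaMeasure (ha : 0 < a) (hb : 0 < b) (g : ℝ → ℝ) :
    ∫ x, x * g x ∂betaMeasure a b = a / (a + b) * ∫ x, g x ∂betaMeasure (a + 1) b := by
  rw [integral_betaMeasure ha hb, integral_betaMeasure (by positivity) hb, ← integral_const_mul]
  congr with x
  rw [← mul_assoc, mul_comm _ x, id_mul_betaPDFReal ha hb, mul_assoc]

lemma integral_id_betaMeasure (ha : 0 < a) (hb : 0 < b) :
    ∫ x, x ∂betaMeasure a b = a / (a + b) := by
  have := isProbabilityMeasureBeta (add_pos ha one_pos) hb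
  simpa using integral_id_mul_betaMeasure ha hb fun _ => 1

lemma integral_sq_betaMeasure (ha : 0 < a) (hb : 0 < b) :
    ∫ x, x ^ 2 ∂betaMeasure a b = a / (a + b) * ((a + 1) / (a + b + 1)) := by
  simp_rw [sq, integral_id_mul_betaMeasure ha hb (fun x => x),
    integral_id_betaMeasure (add_pos ha one_pos) hb, add_right_comm a 1 b]

lemma memLp_id_betaMeasure (ha : 0 < a) (hb : 0 < b) : MemLp id 2 (betaMeasure a b) := by
  have := isProbabilityMeasureBeta ha hb
  refine MemLp.of_bound aestronglyMeasurable_id 1 ?_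
  filter_upwards [ae_betaMeasure_mem_Ioo a b] with x hx
  rw [id, Real.norm_eq_abs, abs_le]
  constructor <;> linarith [hx.1, hx.2]

lemma integral_sq_betaMeasure_le (ha : 1 / 2 ≤ a) (hb : 0 < b) :
    ∫ x, x ^ 2 ∂betaMeasure a b ≤ 3 * (∫ x, x ∂betaMeasure a b) ^ 2 := by
  have ha0 : 0 < a := by linarith
  have hab : 0 < a + b := by linarith
  have hmean : (a + 1) / (a + b + 1) ≤ 3 * (a / (a + b)) := by
    rw [← mul_div_assoc, div_le_div_iff₀ (by positivity) hab]
    nlinarith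
  rw [integral_sq_betaMeasure ha0 hb, integral_id_betaMeasure ha0 hb]
  calc a / (a + b) * ((a + 1) / (a + b + 1)) ≤ a / (a + b) * (3 * (a / (a + b))) := by gcongr
    _ = 3 * (a / (a + b)) ^ 2 := by ring

lemma betaMeasure_real_Iio_half_mean_le (ha : 1 / 2 ≤ a) (hb : 0 < b) :
    (betaMeasure a b).real (Iio (a / (a + b) / 2)) ≤ 11 / 12 := by
  have ha0 : 0 < a := by linarith
  have := isProbabilityMeasureBeta ha0 hb
  have h := measureReal_lt_half_integral_le (X := fun x => x) (memLp_id_betaMeasure ha0 hb)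
    (by rw [integral_id_betaMeasure ha0 hb]; positivity) (integral_sq_betaMeasure_le ha hb)
  rwa [integral_id_betaMeasure ha0 hb] at h

lemma regIncBeta_eq_betaMeasure_real_Iio (ha : 0 < a) (hb : 0 < b) {x : ℝ} (hx0 : 0 ≤ x)
    (hx1 : x ≤ 1) : regIncBeta a b x = (betaMeasure a b).real (Iio x) := by
  rw [← integral_indicator_one measurableSet_Iio, integral_betaMeasure ha hb]
  have hind : (fun y => betaPDFReal a b y * (Iio x).indicator 1 y) =
      (Iio x).indicator (betaPDFReal a b) := by
    ext y
    by_cases hy : y ∈ Iio x <;> simp [hy]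
  rw [hind, integral_indicator measurableSet_Iio, betaPDFReal_eq_indicator,
    setIntegral_indicator measurableSet_Ioo, Iio_inter_Ioo, min_eq_left hx1, integral_div,
    regIncBeta, intervalIntegral.integral_of_le hx0, integral_Ioc_eq_integral_Ioo, beta]

end Beta

/-- If `1 ≤ r < d` and `Z ∼ Beta(r/2, (d−r)/2)`, then
`P(Z ≥ r/(2d)) ≥ 1/12`; equivalently `1 − I_{r/(2d)}(r/2, (d−r)/2) ≥ 1/12`. -/
theorem stmt6 (r d : ℕ) (hr : 1 ≤ r) (hrd : r < d)
    {Ω : Type*} [MeasureSpace Ω] [IsProbabilityMeasure (ℙ : Measure Ω)]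
    (Z : Ω → ℝ)
    (hZ : Measure.map Z ℙ =
      (volume.restrict (Set.Ioo (0 : ℝ) 1)).withDensity (fun y =>
        ENNReal.ofReal
          (y ^ ((r : ℝ) / 2 - 1) * (1 - y) ^ (((d : ℝ) - r) / 2 - 1) /
            (Real.Gamma ((r : ℝ) / 2) * Real.Gamma (((d : ℝ) - r) / 2) /
              Real.Gamma ((r : ℝ) / 2 + ((d : ℝ) - r) / 2))))) :
    ENNReal.ofReal (1 / 12 : ℝ) ≤ ℙ {ω | (r : ℝ) / (2 * d) ≤ Z ω} ∧
      (1 : ℝ) / 12 ≤ 1 - regIncBeta ((r : ℝ) / 2) (((d : ℝ) - r) / 2) ((r : ℝ) / (2 * d)) := by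
  set a : ℝ := (r : ℝ) / 2 with ha_def
  set b : ℝ := ((d : ℝ) - r) / 2 with hb_def
  have hr1 : (1 : ℝ) ≤ r := by exact_mod_cast hr
  have hrd' : (r : ℝ) < d := by exact_mod_cast hrd
  have ha : 1 / 2 ≤ a := by rw [ha_def]; linarith
  have ha0 : 0 < a := by linarith
  have hb : 0 < b := by rw [hb_def]; linarith
  have hx : (r : ℝ) / (2 * d) = a / (a + b) / 2 := by
    have : (d : ℝ) ≠ 0 := by linarith
    field_simp
    ring
  have hβ : Measure.map Z ℙ = betaMeasure a b :=
    hZ.trans (withDensity_restrict_Ioo_eq_betaMeasure a b)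
  have := isProbabilityMeasureBeta ha0 hb
  have hlow := betaMeasure_real_Iio_half_mean_le ha hb
  rw [← hx] at hlow
  refine ⟨?_, ?_⟩
  · convert ofReal_one_sub_le_measure_setOf_le hβ hlow using 2
    norm_num
  · rw [regIncBeta_eq_betaMeasure_real_Iio ha0 hb (by positivity)
      (div_le_one_of_le₀ (by linarith) (by positivity))]
    linarith
end
end

section
/- For all integers 1 ≤ r ≤ d, the quantity τ := √(d/r) · Γ((r+1)/2)·Γ(d/2) / (Γ(r/2)·Γ((d+1)/2)) satisfies 1/√2 ≤ τ ≤ 1, where Γ denotes the Gamma function. -/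
/-!
Let `W n = ∫₀^π sinⁿ`. The Wallis recursion `(n+2) W (n+2) = (n+1) W n` with `W 0 = π`,
`W 1 = 2` gives `W n · Γ(n/2 + 1) = √π · Γ((n+1)/2)`, so `τ² = r W r² / (d W d²)`.
By Cauchy–Schwarz `W (n+1)² ≤ W n · W (n+2)`, which together with the recursion makes
`n W n²` nondecreasing; this gives `τ ≤ 1`. Since `W n W (n+1) = 2π/(n+1)` and `W` is
antitone, `π ≤ n W n² ≤ 2π` for `n ≥ 1`, which gives `τ² ≥ 1/2`.
-/

open Real

noncomputable section

/-- τ = √(d/r) Γ((r+1)/2) Γ(d/2) / (Γ(r/2) Γ((d+1)/2)). -/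
def tauConst (d r : ℕ) : ℝ :=
  Real.sqrt ((d : ℝ) / r) *
    (Real.Gamma (((r : ℝ) + 1) / 2) * Real.Gamma ((d : ℝ) / 2)) /
      (Real.Gamma ((r : ℝ) / 2) * Real.Gamma (((d : ℝ) + 1) / 2))

def wallisIntegral (n : ℕ) : ℝ := ∫ x in (0 : ℝ)..π, sin x ^ n

namespace wallisIntegral

lemma pos (n : ℕ) : 0 < wallisIntegral n := integral_sin_pow_pos n

lemma succ_le (n : ℕ) : wallisIntegral (n + 1) ≤ wallisIntegral n := integral_sin_pow_succ_le n

lemma zero : wallisIntegral 0 = π := by simp [wallisIntegral]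

lemma one : wallisIntegral 1 = 2 := by norm_num [wallisIntegral, integral_sin]

lemma add_two (n : ℕ) :
    ((n : ℝ) + 2) * wallisIntegral (n + 2) = ((n : ℝ) + 1) * wallisIntegral n := by
  rw [wallisIntegral, integral_sin_pow, sin_zero, sin_pi]
  field_simp
  simp [wallisIntegral]

lemma integral_sin_pow_mul_sub_sq (n : ℕ) (t : ℝ) :
    ∫ x in (0 : ℝ)..π, sin x ^ n * (sin x - t) ^ 2
      = t ^ 2 * wallisIntegral n - 2 * t * wallisIntegral (n + 1) + wallisIntegral (n + 2) := by
  have hint (m : ℕ) : IntervalIntegrable (fun x => sin x ^ m) MeasureTheory.volume 0 π :=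
    (continuous_sin.pow m).intervalIntegrable 0 π
  have hexpand : (fun x => sin x ^ n * (sin x - t) ^ 2)
      = fun x => t ^ 2 * sin x ^ n - 2 * t * sin x ^ (n + 1) + sin x ^ (n + 2) := by
    funext x; ring
  rw [hexpand, intervalIntegral.integral_add (((hint n).const_mul _).sub ((hint _).const_mul _))
    (hint _), intervalIntegral.integral_sub ((hint n).const_mul _) ((hint _).const_mul _),
    intervalIntegral.integral_const_mul, intervalIntegral.integral_const_mul]
  rfl

lemma succ_sq_le (n : ℕ) :
    wallisIntegral (n + 1) ^ 2 ≤ wallisIntegral n * wallisIntegral (n + 2) := by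
  have hquad (t : ℝ) : 0 ≤ wallisIntegral n * (t * t) + (-2 * wallisIntegral (n + 1)) * t
      + wallisIntegral (n + 2) := by
    have : 0 ≤ ∫ x in (0 : ℝ)..π, sin x ^ n * (sin x - t) ^ 2 :=
      intervalIntegral.integral_nonneg pi_pos.le fun x hx =>
        have := sin_nonneg_of_nonneg_of_le_pi hx.1 hx.2
        by positivity
    rw [integral_sin_pow_mul_sub_sq] at this
    linarith
  have := discrim_le_zero hquad
  rw [discrim] at this
  nlinarith [pos n]

lemma mul_Gamma_div_two_add_one (n : ℕ) :
    wallisIntegral n * Gamma ((n : ℝ) / 2 + 1) = √π * Gamma (((n : ℝ) + 1) / 2) := by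
  induction n using Nat.twoStepInduction with
  | zero => norm_num [zero, Gamma_one_half_eq, mul_self_sqrt pi_pos.le]
  | one =>
    rw [show ((1 : ℕ) : ℝ) / 2 + 1 = 1 / 2 + 1 by norm_num, Gamma_add_one one_half_pos.ne']
    norm_num [one, Gamma_one_half_eq]
    ring
  | more n ih _ =>
    have hΓ₁ := Gamma_add_one (show (n : ℝ) / 2 + 1 ≠ 0 by positivity)
    have hΓ₂ := Gamma_add_one (show ((n : ℝ) + 1) / 2 ≠ 0 by positivity)
    rw [show ((n + 2 : ℕ) : ℝ) / 2 + 1 = (n : ℝ) / 2 + 1 + 1 by push_cast; ring,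
      show (((n + 2 : ℕ) : ℝ) + 1) / 2 = ((n : ℝ) + 1) / 2 + 1 by push_cast; ring, hΓ₁, hΓ₂]
    apply mul_left_cancel₀ (show (n : ℝ) + 2 ≠ 0 by positivity)
    linear_combination ((n : ℝ) / 2 + 1) * Gamma ((n : ℝ) / 2 + 1) * add_two n
      + ((n : ℝ) + 1) * ((n : ℝ) / 2 + 1) * ih

lemma Gamma_add_one_div_two_eq {n : ℕ} (hn : 1 ≤ n) :
    Gamma (((n : ℝ) + 1) / 2) = n * wallisIntegral n / (2 * √π) * Gamma ((n : ℝ) / 2) := by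
  have hn' : (0 : ℝ) < n := by exact_mod_cast hn
  have := mul_Gamma_div_two_add_one n
  rw [Gamma_add_one (by positivity)] at this
  field_simp
  linear_combination -2 * this

lemma mul_succ (n : ℕ) :
    wallisIntegral n * wallisIntegral (n + 1) = 2 * π / ((n : ℝ) + 1) := by
  induction n with
  | zero => norm_num [zero, one]; ring
  | succ m ih =>
    have := add_two m
    rw [eq_div_iff (by positivity)] at ih ⊢
    push_cast
    linear_combination wallisIntegral (m + 1) * this + ih

lemma monotone_natCast_mul_sq :
    Monotone fun n : ℕ => (n : ℝ) * wallisIntegral n ^ 2 := by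
  refine monotone_nat_of_le_succ fun n => ?_
  rcases n with _ | m
  · simp only [CharP.cast_eq_zero, zero_mul]; positivity
  · push_cast
    calc ((m : ℝ) + 1) * wallisIntegral (m + 1) ^ 2
        ≤ ((m : ℝ) + 1) * (wallisIntegral m * wallisIntegral (m + 2)) := by
          gcongr; exact succ_sq_le m
      _ = ((m : ℝ) + 1 + 1) * wallisIntegral (m + 2) ^ 2 := by
          linear_combination (-wallisIntegral (m + 2)) * add_two m

lemma pi_le_natCast_mul_sq {n : ℕ} (hn : 1 ≤ n) :
    π ≤ (n : ℝ) * wallisIntegral n ^ 2 := by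
  have hn' : (1 : ℝ) ≤ n := by exact_mod_cast hn
  calc π ≤ (n : ℝ) * (2 * π / ((n : ℝ) + 1)) := by
        rw [mul_div_assoc', le_div_iff₀ (by positivity)]
        nlinarith [pi_pos]
    _ = (n : ℝ) * (wallisIntegral n * wallisIntegral (n + 1)) := by rw [mul_succ]
    _ ≤ (n : ℝ) * wallisIntegral n ^ 2 := by
        rw [sq]; gcongr
        · exact (pos n).le
        · exact succ_le n

lemma natCast_mul_sq_le_two_pi (n : ℕ) :
    (n : ℝ) * wallisIntegral n ^ 2 ≤ 2 * π := by
  rcases n with _ | m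
  · simp only [CharP.cast_eq_zero, zero_mul]; positivity
  · calc ((m + 1 : ℕ) : ℝ) * wallisIntegral (m + 1) ^ 2
        ≤ ((m + 1 : ℕ) : ℝ) * (wallisIntegral m * wallisIntegral (m + 1)) := by
          rw [sq]; gcongr
          · exact (pos _).le
          · exact succ_le m
      _ = 2 * π := by
          rw [mul_succ]; push_cast; field_simp

end wallisIntegral

lemma tauConst_eq {d r : ℕ} (hr : 1 ≤ r) (hd : 1 ≤ d) :
    tauConst d r = √(r * wallisIntegral r ^ 2 / (d * wallisIntegral d ^ 2)) := by
  have hr' : (0 : ℝ) < r := by exact_mod_cast hr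
  have hd' : (0 : ℝ) < d := by exact_mod_cast hd
  have := wallisIntegral.pos d
  have := Gamma_pos_of_pos (show 0 < (r : ℝ) / 2 by positivity)
  have := Gamma_pos_of_pos (show 0 < (d : ℝ) / 2 by positivity)
  rw [tauConst, wallisIntegral.Gamma_add_one_div_two_eq hr,
    wallisIntegral.Gamma_add_one_div_two_eq hd, sqrt_div hd'.le,
    sqrt_div (by positivity), sqrt_mul hr'.le, sqrt_mul hd'.le, sqrt_sq (wallisIntegral.pos r).le,
    sqrt_sq (wallisIntegral.pos d).le]
  field_simp
  rw [sq_sqrt hd'.le, sq_sqrt hr'.le]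
  ring

/-- For all integers `1 ≤ r ≤ d`, `1/√2 ≤ τ ≤ 1`. -/
theorem stmt9 (d r : ℕ) (hr : 1 ≤ r) (hrd : r ≤ d) :
    1 / Real.sqrt 2 ≤ tauConst d r ∧ tauConst d r ≤ 1 := by
  have hlower := wallisIntegral.pi_le_natCast_mul_sq hr
  have hupper := wallisIntegral.natCast_mul_sq_le_two_pi d
  have hmono := wallisIntegral.monotone_natCast_mul_sq hrd
  have hpos : 0 < d * wallisIntegral d ^ 2 := pi_pos.trans_le (hlower.trans hmono)
  rw [tauConst_eq hr (hr.trans hrd)]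
  constructor
  · rw [one_div, ← sqrt_inv]
    apply sqrt_le_sqrt
    rw [le_div_iff₀ hpos]
    linarith
  · exact sqrt_le_one.mpr (div_le_one_of_le₀ hmono hpos.le)
end
end

section
/- For every real x ≥ 1/2, the Gamma function satisfies √(x/2) ≤ Γ(x + 1/2)/Γ(x) ≤ √x. -/
open Real

lemma wendel_aux (x : ℝ) (hx : 0 < x) :
    Real.Gamma (x + 1 / 2) ≤ Real.Gamma x * Real.sqrt x := by
  have h := Real.Gamma_mul_add_mul_le_rpow_Gamma_mul_rpow_Gamma hx
    (show (0:ℝ) < x + 1 by linarith) (show (0:ℝ) < 1/2 by norm_num)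
    (show (0:ℝ) < 1/2 by norm_num) (by norm_num)
  have he : (1/2 : ℝ) * x + (1/2) * (x + 1) = x + 1/2 := by ring
  rw [he, Real.Gamma_add_one hx.ne'] at h
  have hg := Real.Gamma_pos_of_pos hx
  rw [← Real.mul_rpow hg.le (by positivity), ← Real.sqrt_eq_rpow] at h
  have : Real.Gamma x * (x * Real.Gamma x) = (Real.Gamma x * Real.sqrt x) ^ 2 := by
    rw [mul_pow, Real.sq_sqrt hx.le]; ring
  rwa [this, Real.sqrt_sq (by positivity)] at h

/-- For every real `x ≥ 1/2`, `√(x/2) ≤ Γ(x + 1/2)/Γ(x) ≤ √x`. -/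
theorem stmt11 (x : ℝ) (hx : 1 / 2 ≤ x) :
    Real.sqrt (x / 2) ≤ Real.Gamma (x + 1 / 2) / Real.Gamma x ∧
      Real.Gamma (x + 1 / 2) / Real.Gamma x ≤ Real.sqrt x := by
  have hx0 : 0 < x := by linarith
  have hg := Real.Gamma_pos_of_pos hx0
  have hg2 := Real.Gamma_pos_of_pos (show (0:ℝ) < x + 1/2 by linarith)
  constructor
  · -- lower bound
    have h := wendel_aux (x + 1/2) (by linarith)
    have he : x + 1/2 + 1/2 = x + 1 := by ring
    rw [he, Real.Gamma_add_one hx0.ne'] at h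
    -- h : x * Γ x ≤ Γ (x + 1/2) * √(x + 1/2)
    have hs : 0 < Real.sqrt (x + 1/2) := Real.sqrt_pos.mpr (by linarith)
    have key : Real.sqrt (x/2) * Real.sqrt (x + 1/2) ≤ x := by
      rw [← Real.sqrt_mul (by linarith) _]
      calc Real.sqrt (x/2 * (x + 1/2)) ≤ Real.sqrt (x^2) := by
            apply Real.sqrt_le_sqrt; nlinarith
        _ = x := Real.sqrt_sq hx0.le
    rw [le_div_iff₀ hg]
    have := mul_le_mul_of_nonneg_right key hg.le
    have h2 : Real.sqrt (x/2) * Real.Gamma x * Real.sqrt (x + 1/2)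
        ≤ Real.Gamma (x + 1/2) * Real.sqrt (x + 1/2) := by nlinarith
    exact le_of_mul_le_mul_right h2 hs
  · have h := wendel_aux x hx0
    rw [div_le_iff₀ hg]
    linarith [h, mul_comm (Real.Gamma x) (Real.sqrt x)]
end

section
/- Let d ≥ 2 and 1 ≤ r ≤ d be integers, let P be a (d,r)-Haar matrix, let e₁ ∈ ℝ^d be the first standard basis vector, and set u := PP^⊤e₁/‖P^⊤e₁‖ (well-defined almost surely). Then E[uu^⊤] = (d(r−1))/(r(d−1)) · e₁e₁^⊤ + ((d−r)/(r(d−1))) · I_d. -/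
open MeasureTheory ProbabilityTheory Real Matrix

noncomputable section

instance matrixMeasurableSpace {m n α : Type*} [MeasurableSpace α] :
    MeasurableSpace (Matrix m n α) :=
  inferInstanceAs (MeasurableSpace (m → n → α))

/-- A probability measure on the orthogonal group O(d) is THE normalized Haar probability
measure iff it is a left-invariant probability measure. -/
def IsHaarOrth {d : ℕ} (μH : Measure (Matrix.orthogonalGroup (Fin d) ℝ)) : Prop :=
  IsProbabilityMeasure μH ∧
    ∀ U : Matrix.orthogonalGroup (Fin d) ℝ, Measure.map (fun V => U * V) μH = μH

/-- A (d,r)-Haar random matrix: distributed as √(d/r) times the first r columns of a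
Haar-distributed orthogonal matrix. -/
def IsHaarMatrix {d r : ℕ} {Ω : Type*} [MeasurableSpace Ω] (ℙ' : Measure Ω) (hrd : r ≤ d)
    (P : Ω → Matrix (Fin d) (Fin r) ℝ) : Prop :=
  ∃ μH : Measure (Matrix.orthogonalGroup (Fin d) ℝ), IsHaarOrth μH ∧
    Measure.map P ℙ' =
      Measure.map (fun U : Matrix.orthogonalGroup (Fin d) ℝ =>
        Real.sqrt ((d : ℝ) / r) •
          (U : Matrix (Fin d) (Fin d) ℝ).submatrix id (Fin.castLE hrd)) μH

/-! Write `W` for the first `r` columns of a Haar orthogonal matrix `U`, so that `P = √(d/r) W`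
and `u = √(d/r) v` with `v := W Wᵀ e₁ / ‖Wᵀ e₁‖`. Since `W Wᵀ` is an orthogonal projection,
`‖v‖ = 1` as soon as `Wᵀ e₁ ≠ 0`, and `v₁² = ‖Wᵀ e₁‖²` has mean `r/d` because every entry of `U`
has second moment `1/d`. Left multiplication of `U` by sign changes and transpositions fixing `e₁`
shows that `E[v vᵀ]` is diagonal with equal entries away from `e₁`; as its trace is
`E‖v‖² = 1`, these entries are `(1 - r/d)/(d - 1)`.

`Wᵀ e₁ ≠ 0` almost surely: by invariance, every set `{U | ⟨x, U eₖ⟩ = 0}` with `x ≠ 0` has the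
measure of `{U | U₁ₖ = 0}`, and a fixed `U` lies in fewer than `d` of these sets for the moment
vectors `x = (tʲ)ⱼ`, `t ∈ ℕ`, because the column `U eₖ ≠ 0` gives a nonzero polynomial of degree
`< d`. -/

open scoped Finset ENNReal

namespace HaarProjection

instance matrixBorelSpace {m n : ℕ} : BorelSpace (Matrix (Fin m) (Fin n) ℝ) :=
  inferInstanceAs (BorelSpace (Fin m → Fin n → ℝ))

abbrev Orth (d : ℕ) := Matrix.orthogonalGroup (Fin d) ℝ

section UnitProj

variable {n ι : Type*} [Fintype ι]

/-- `unitProj A z = A Aᵀ e_z / ‖Aᵀ e_z‖`, using `‖Aᵀ e_z‖² = (A Aᵀ)_zz`; it is `0` when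
`Aᵀ e_z = 0`. -/
def unitProj (A : Matrix n ι ℝ) (z : n) (i : n) : ℝ :=
  (A * Aᵀ) i z / √((A * Aᵀ) z z)

lemma gram_apply_self_nonneg (A : Matrix n ι ℝ) (z : n) : 0 ≤ (A * Aᵀ) z z := by
  rw [mul_apply]
  exact Finset.sum_nonneg fun k _ => mul_self_nonneg _

lemma unitProj_smul (A : Matrix n ι ℝ) (z : n) {c : ℝ} (hc : 0 ≤ c) :
    unitProj (c • A) z = c • unitProj A z := by
  ext i
  have hgram : (c • A) * (c • A)ᵀ = (c * c) • (A * Aᵀ) := by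
    rw [transpose_smul, Matrix.smul_mul, Matrix.mul_smul, smul_smul]
  simp only [unitProj, hgram, Matrix.smul_apply, smul_eq_mul, Pi.smul_apply,
    Real.sqrt_mul (mul_self_nonneg c), Real.sqrt_mul_self hc]
  rcases eq_or_ne c 0 with rfl | hc0
  · simp
  · rw [mul_assoc, mul_div_mul_left _ _ hc0, mul_div_assoc]

lemma measurable_unitProj (z i : n) : Measurable fun A : Matrix n ι ℝ => unitProj A z i := by
  simp only [unitProj, mul_apply, transpose_apply]
  fun_prop

lemma unitProj_mul_unitProj (A : Matrix n ι ℝ) (z i j : n) :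
    unitProj A z i * unitProj A z j = (A * Aᵀ) i z * (A * Aᵀ) j z / (A * Aᵀ) z z := by
  rw [unitProj, unitProj, div_mul_div_comm, Real.mul_self_sqrt (gram_apply_self_nonneg A z)]

lemma unitProj_self_sq (A : Matrix n ι ℝ) (z : n) : unitProj A z z ^ 2 = (A * Aᵀ) z z := by
  rw [sq, unitProj_mul_unitProj, mul_self_div_self]

lemma unitProj_mul_of_row_eq_single [Fintype n] [DecidableEq n] (A : Matrix n ι ℝ) {z : n}
    {V : Matrix n n ℝ} (hV : V z = Pi.single z 1) :
    unitProj (V * A) z = V *ᵥ unitProj A z := by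
  have hrow : ∀ (M : Matrix n n ℝ) (i : n), (M * Vᵀ) i z = M i z := fun M i => by
    rw [mul_apply]; simp [transpose_apply, hV, Pi.single_apply]
  have hgram : (V * A) * (V * A)ᵀ = V * (A * Aᵀ) * Vᵀ := by
    rw [transpose_mul, Matrix.mul_assoc, Matrix.mul_assoc, Matrix.mul_assoc]
  have hzz : (V * (A * Aᵀ)) z z = (A * Aᵀ) z z := by
    rw [mul_apply]; simp [hV, Pi.single_apply]
  ext i
  simp only [unitProj]
  rw [hgram, hrow, hrow, hzz, mulVec, dotProduct, mul_apply, Finset.sum_div]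
  simp only [mul_div_assoc]
  rfl

variable [Fintype n] [DecidableEq ι] (A : Matrix n ι ℝ) (hA : Aᵀ * A = 1)
include hA

lemma gram_mul_gram : (A * Aᵀ) * (A * Aᵀ) = A * Aᵀ := by
  rw [Matrix.mul_assoc, ← Matrix.mul_assoc Aᵀ, hA, Matrix.one_mul]

lemma sum_gram_apply_sq (z : n) : ∑ i, (A * Aᵀ) i z ^ 2 = (A * Aᵀ) z z := by
  conv_rhs => rw [← gram_mul_gram A hA, mul_apply]
  refine Finset.sum_congr rfl fun i _ => ?_
  rw [sq, ← transpose_apply (A * Aᵀ) z i, transpose_mul, transpose_transpose]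

lemma sum_unitProj_sq {z : n} (hz : (A * Aᵀ) z z ≠ 0) :
    ∑ i, unitProj A z i ^ 2 = 1 := by
  simp_rw [sq, unitProj_mul_unitProj, ← Finset.sum_div, ← sq, sum_gram_apply_sq A hA]
  exact div_self hz

lemma abs_unitProj_le_one (z i : n) : |unitProj A z i| ≤ 1 := by
  rw [abs_le_one_iff_mul_self_le_one, unitProj_mul_unitProj, ← sq]
  refine div_le_one_of_le₀ ?_ (gram_apply_self_nonneg A z)
  rw [← sum_gram_apply_sq A hA z]
  exact Finset.single_le_sum (f := fun i => (A * Aᵀ) i z ^ 2) (fun _ _ => sq_nonneg _)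
    (Finset.mem_univ i)

end UnitProj

section Orthogonal

variable {n : Type*} [Fintype n] [DecidableEq n]

lemma swap_mem_orthogonalGroup (i j : n) : Matrix.swap ℝ i j ∈ Matrix.orthogonalGroup n ℝ := by
  rw [Matrix.mem_orthogonalGroup_iff, transpose_swap, swap_mul_self]

lemma diagonal_mem_orthogonalGroup {s : n → ℝ} (hs : ∀ a, s a * s a = 1) :
    diagonal s ∈ Matrix.orthogonalGroup n ℝ := by
  rw [Matrix.mem_orthogonalGroup_iff, diagonal_transpose, diagonal_mul_diagonal, ← diagonal_one]
  exact congrArg diagonal (funext hs)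

lemma exists_mem_orthogonalGroup_row_eq (z : n) {x : EuclideanSpace ℝ n} (hx : ‖x‖ = 1) :
    ∃ V ∈ Matrix.orthogonalGroup n ℝ, ∀ j, V z j = x j := by
  have hon : Orthonormal ℝ (({z} : Set n).domRestrict fun _ => x) := by
    rw [orthonormal_iff_ite]
    rintro ⟨a, rfl⟩ ⟨b, rfl⟩
    simp [hx]
  obtain ⟨b, hb⟩ := hon.exists_orthonormalBasis_extension_of_card_eq (by simp)
  refine ⟨((EuclideanSpace.basisFun n ℝ).toBasis.toMatrix b)ᵀ, ?_, fun j => ?_⟩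
  · rw [Matrix.mem_orthogonalGroup_iff, transpose_transpose, ← mem_orthogonalGroup_iff']
    exact (EuclideanSpace.basisFun n ℝ).toMatrix_orthonormalBasis_mem_unitary b
  · simp [Module.Basis.toMatrix_apply, hb z rfl]

end Orthogonal

section Counting

open scoped Classical in
lemma card_filter_sum_mul_pow_eq_zero_lt {R ι : Type*} [CommRing R] [IsDomain R] {n : ℕ}
    {v : Fin n → R} (hv : v ≠ 0) {f : ι → R} (hf : Function.Injective f) (s : Finset ι) :
    #{t ∈ s | ∑ i, v i * f t ^ (i : ℕ) = 0} < n := by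
  by_contra! h
  obtain ⟨e⟩ : Nonempty (Fin n ↪ {t // t ∈ {t ∈ s | ∑ i, v i * f t ^ (i : ℕ) = 0}}) :=
    Function.Embedding.nonempty_of_card_le (by simpa using h)
  refine hv (eq_zero_of_forall_index_sum_mul_pow_eq_zero (f := fun j => f (e j))
    (hf.comp (Subtype.val_injective.comp e.injective)) fun j => ?_)
  exact (Finset.mem_filter.mp (e j).2).2

open scoped Classical in
lemma measure_eq_zero_of_card_filter_le {α : Type*} [MeasurableSpace α] (μ : Measure α)
    [IsFiniteMeasure μ] {A : ℕ → Set α} (hA : ∀ t, MeasurableSet (A t)) {c : ℝ≥0∞}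
    (hc : ∀ t, μ (A t) = c) (k : ℕ) (hk : ∀ m x, #{t ∈ Finset.range m | x ∈ A t} ≤ k) :
    c = 0 := by
  have hbound (m : ℕ) : m * c ≤ k * μ Set.univ := calc
    m * c = ∑ t ∈ Finset.range m, μ (A t) := by simp [hc]
    _ = ∫⁻ x, ∑ t ∈ Finset.range m, (A t).indicator 1 x ∂μ := by
      rw [lintegral_finsetSum _ fun t _ => (measurable_one.indicator (hA t))]
      simp [lintegral_indicator_one (hA _)]
    _ ≤ ∫⁻ _, (k : ℝ≥0∞) ∂μ := lintegral_mono fun x => by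
      simp only [Set.indicator_apply, Pi.one_apply, Finset.sum_boole]
      exact_mod_cast hk m x
    _ = k * μ Set.univ := lintegral_const _
  by_contra hc0
  obtain ⟨m, hm⟩ := ENNReal.exists_nat_mul_gt hc0 (by finiteness : (k : ℝ≥0∞) * μ Set.univ ≠ ⊤)
  exact (hbound m).not_gt hm

end Counting

section Haar

variable {d : ℕ} {μ : Measure (Orth d)}

lemma measurable_entry (i j : Fin d) :
    Measurable fun U : Orth d => (U : Matrix (Fin d) (Fin d) ℝ) i j :=
  (measurable_pi_apply j).comp ((measurable_pi_apply i).comp measurable_subtype_coe)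

lemma transpose_mul_self (U : Orth d) : (U : Matrix (Fin d) (Fin d) ℝ)ᵀ * U = 1 :=
  (mem_orthogonalGroup_iff' _ _).mp U.2

lemma sum_entry_sq (U : Orth d) (k : Fin d) :
    ∑ a, (U : Matrix (Fin d) (Fin d) ℝ) a k ^ 2 = 1 := by
  simpa [mul_apply, sq] using congrFun (congrFun (transpose_mul_self U) k) k

lemma entry_sq_le_one (U : Orth d) (a k : Fin d) : (U : Matrix (Fin d) (Fin d) ℝ) a k ^ 2 ≤ 1 := by
  rw [← sum_entry_sq U k]
  exact Finset.single_le_sum (f := fun a => (U : Matrix (Fin d) (Fin d) ℝ) a k ^ 2)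
    (fun _ _ => sq_nonneg _) (Finset.mem_univ a)

lemma integrable_entry_sq [IsFiniteMeasure μ] (a k : Fin d) :
    Integrable (fun U : Orth d => (U : Matrix (Fin d) (Fin d) ℝ) a k ^ 2) μ :=
  .of_bound ((measurable_entry a k).pow_const 2).aestronglyMeasurable 1
    (ae_of_all _ fun U => by rw [Real.norm_of_nonneg (sq_nonneg _)]; exact entry_sq_le_one U a k)

lemma integral_entry_sq [IsProbabilityMeasure μ] [μ.IsMulLeftInvariant] (a k : Fin d) :
    ∫ U, (U : Matrix (Fin d) (Fin d) ℝ) a k ^ 2 ∂μ = 1 / d := by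
  have hrow (b : Fin d) : ∫ U, (U : Matrix (Fin d) (Fin d) ℝ) b k ^ 2 ∂μ =
      ∫ U, (U : Matrix (Fin d) (Fin d) ℝ) a k ^ 2 ∂μ := by
    rw [← integral_mul_left_eq_self _ (⟨swap ℝ a b, swap_mem_orthogonalGroup a b⟩ : Orth d)]
    simp
  have hsum : ∑ b : Fin d, ∫ U, (U : Matrix (Fin d) (Fin d) ℝ) b k ^ 2 ∂μ = 1 := by
    rw [← integral_finsetSum _ fun b _ => integrable_entry_sq b k]
    simp [sum_entry_sq]
  simp only [hrow, Finset.sum_const, Finset.card_univ, Fintype.card_fin, nsmul_eq_mul] at hsum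
  rw [eq_div_iff_mul_eq (by rintro h; simp [h] at hsum), mul_comm, hsum]

lemma measure_sum_mul_entry_eq_zero_eq [μ.IsMulLeftInvariant] (z k : Fin d)
    {x : EuclideanSpace ℝ (Fin d)} (hx : x ≠ 0) :
    μ {U | ∑ j, x j * (U : Matrix (Fin d) (Fin d) ℝ) j k = 0} =
      μ {U | (U : Matrix (Fin d) (Fin d) ℝ) z k = 0} := by
  have hx' : ‖x‖ ≠ 0 := norm_ne_zero_iff.mpr hx
  obtain ⟨V, hV, hVz⟩ := exists_mem_orthogonalGroup_row_eq z (x := ‖x‖⁻¹ • x)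
    (by rw [norm_smul, norm_inv, norm_norm, inv_mul_cancel₀ hx'])
  rw [← measure_preimage_mul μ ⟨V, hV⟩ {U | (U : Matrix (Fin d) (Fin d) ℝ) z k = 0}]
  congr 1
  ext U
  simp only [Set.mem_preimage, Set.mem_ofPred_eq, Matrix.UnitaryGroup.mul_val, mul_apply, hVz,
    PiLp.smul_apply, smul_eq_mul, mul_assoc, ← Finset.mul_sum, mul_eq_zero, inv_eq_zero, hx',
    false_or]

lemma ae_entry_ne_zero [IsFiniteMeasure μ] [μ.IsMulLeftInvariant] (z k : Fin d) :
    ∀ᵐ (U : Orth d) ∂μ, (U : Matrix (Fin d) (Fin d) ℝ) z k ≠ 0 := by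
  let moment (t : ℕ) : EuclideanSpace ℝ (Fin d) := WithLp.toLp 2 fun j => (t : ℝ) ^ (j : ℕ)
  have hmoment (t : ℕ) : moment t ≠ 0 := fun h => by
    simpa [moment] using congrArg (fun x : EuclideanSpace ℝ (Fin d) => x ⟨0, z.pos⟩) h
  have hcol (U : Orth d) : (fun j => (U : Matrix (Fin d) (Fin d) ℝ) j k) ≠ 0 := fun h => by
    have := congrFun (congrFun (transpose_mul_self U) k) k
    simp [mul_apply, fun j => congrFun h j] at this
  rw [ae_iff]
  simp only [ne_eq, not_not]
  refine measure_eq_zero_of_card_filter_le μ (k := d)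
    (A := fun t => {U : Orth d | ∑ j, moment t j * (U : Matrix (Fin d) (Fin d) ℝ) j k = 0})
    (fun t => measurableSet_eq_fun (Finset.measurable_sum _ fun j _ =>
      (measurable_entry j k).const_mul _) measurable_const)
    (fun t => measure_sum_mul_entry_eq_zero_eq z k (hmoment t)) fun m U => ?_
  simpa [moment, mul_comm] using (card_filter_sum_mul_pow_eq_zero_lt (hcol U) Nat.cast_injective
    (Finset.range m)).le

end Haar

section FirstColumns

variable {d r : ℕ} {μ : Measure (Orth d)}

def firstCols (hrd : r ≤ d) (U : Orth d) : Matrix (Fin d) (Fin r) ℝ :=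
  (U : Matrix (Fin d) (Fin d) ℝ).submatrix id (Fin.castLE hrd)

lemma transpose_firstCols_mul_firstCols (hrd : r ≤ d) (U : Orth d) :
    (firstCols hrd U)ᵀ * firstCols hrd U = 1 := by
  rw [firstCols, transpose_submatrix, ← submatrix_mul _ _ _ _ _ Function.bijective_id,
    transpose_mul_self, submatrix_one _ (Fin.castLE_injective hrd)]

lemma firstCols_mul (hrd : r ≤ d) (V U : Orth d) :
    firstCols hrd (V * U) = (V : Matrix (Fin d) (Fin d) ℝ) * firstCols hrd U := by
  rw [firstCols, firstCols, Matrix.UnitaryGroup.mul_val,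
    submatrix_mul _ _ _ _ _ Function.bijective_id, submatrix_id_id]

lemma measurable_firstCols (hrd : r ≤ d) : Measurable (firstCols (d := d) hrd) :=
  Continuous.measurable (by unfold firstCols; fun_prop)

lemma unitProj_firstCols_mul (hrd : r ≤ d) {z : Fin d} {V : Orth d}
    (hV : (V : Matrix (Fin d) (Fin d) ℝ) z = Pi.single z 1) (U : Orth d) :
    unitProj (firstCols hrd (V * U)) z =
      (V : Matrix (Fin d) (Fin d) ℝ) *ᵥ unitProj (firstCols hrd U) z := by
  rw [firstCols_mul, unitProj_mul_of_row_eq_single _ hV]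

lemma integrable_unitProj_mul [IsFiniteMeasure μ] (hrd : r ≤ d) (z i j : Fin d) :
    Integrable (fun U => unitProj (firstCols hrd U) z i * unitProj (firstCols hrd U) z j) μ := by
  refine Integrable.of_bound (C := 1)
    (((measurable_unitProj z i).mul (measurable_unitProj z j)).comp
      (measurable_firstCols hrd)).aestronglyMeasurable (ae_of_all _ fun U => ?_)
  have h := abs_unitProj_le_one _ (transpose_firstCols_mul_firstCols hrd U) z
  rw [Real.norm_eq_abs, abs_mul]
  exact mul_le_one₀ (h i) (abs_nonneg _) (h j)

lemma integral_unitProj_mul_of_ne [μ.IsMulLeftInvariant] (hrd : r ≤ d) {z i j : Fin d}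
    (hij : i ≠ j) :
    ∫ U, unitProj (firstCols hrd U) z i * unitProj (firstCols hrd U) z j ∂μ = 0 := by
  obtain ⟨m, hmz, hm⟩ : ∃ m, m ≠ z ∧ ((m = i ∧ m ≠ j) ∨ (m = j ∧ m ≠ i)) := by
    by_cases hiz : i = z
    · exact ⟨j, fun h => hij (hiz.trans h.symm), .inr ⟨rfl, fun h => hij h.symm⟩⟩
    · exact ⟨i, hiz, .inl ⟨rfl, hij⟩⟩
  let s : Fin d → ℝ := fun a => if a = m then -1 else 1
  let D : Orth d := ⟨diagonal s, diagonal_mem_orthogonalGroup fun a => by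
    by_cases h : a = m <;> simp [s, h]⟩
  have hD : (D : Matrix (Fin d) (Fin d) ℝ) z = Pi.single z 1 := by
    ext b
    rcases eq_or_ne z b with rfl | h
    · simp [D, s, hmz.symm]
    · simp [D, s, h, Ne.symm h]
  have hflip (U : Orth d) :
      unitProj (firstCols hrd (D * U)) z i * unitProj (firstCols hrd (D * U)) z j =
        -(unitProj (firstCols hrd U) z i * unitProj (firstCols hrd U) z j) := by
    rw [unitProj_firstCols_mul hrd hD]
    rcases hm with ⟨rfl, h⟩ | ⟨rfl, h⟩ <;> simp [D, s, mulVec_diagonal, Ne.symm h]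
  have h := integral_mul_left_eq_self
    (fun U => unitProj (firstCols hrd U) z i * unitProj (firstCols hrd U) z j) (μ := μ) D
  simp only [hflip, integral_neg] at h
  linarith

lemma integral_unitProj_sq_eq [μ.IsMulLeftInvariant] (hrd : r ≤ d) {z i j : Fin d}
    (hi : i ≠ z) (hj : j ≠ z) :
    ∫ U, unitProj (firstCols hrd U) z i ^ 2 ∂μ = ∫ U, unitProj (firstCols hrd U) z j ^ 2 ∂μ := by
  let S : Orth d := ⟨swap ℝ i j, swap_mem_orthogonalGroup i j⟩
  have hS : (S : Matrix (Fin d) (Fin d) ℝ) z = Pi.single z 1 := by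
    ext b
    simpa [S, one_apply, Pi.single_apply, eq_comm] using
      swap_mul_of_ne (R := ℝ) (b := b) hi.symm hj.symm 1
  rw [← integral_mul_left_eq_self _ S]
  simp [unitProj_firstCols_mul hrd hS, S]

lemma integral_unitProj_self_sq [IsProbabilityMeasure μ] [μ.IsMulLeftInvariant] (hrd : r ≤ d)
    (z : Fin d) : ∫ U, unitProj (firstCols hrd U) z z ^ 2 ∂μ = r / d := by
  simp_rw [unitProj_self_sq, firstCols, mul_apply, transpose_apply, submatrix_apply, id, ← sq]
  rw [integral_finsetSum _ fun k _ => integrable_entry_sq _ _]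
  simp [integral_entry_sq, div_eq_mul_inv]

lemma gram_firstCols_apply_self_ne_zero (hrd : r ≤ d) (hr : 0 < r) {z : Fin d} {U : Orth d}
    (hU : (U : Matrix (Fin d) (Fin d) ℝ) z (Fin.castLE hrd ⟨0, hr⟩) ≠ 0) :
    (firstCols hrd U * (firstCols hrd U)ᵀ) z z ≠ 0 := by
  rw [mul_apply]
  exact (Finset.sum_pos' (fun k _ => mul_self_nonneg (firstCols hrd U z k))
    ⟨⟨0, hr⟩, Finset.mem_univ _, mul_self_pos.mpr hU⟩).ne'

lemma sum_integral_unitProj_sq [IsProbabilityMeasure μ] [μ.IsMulLeftInvariant] (hrd : r ≤ d)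
    (hr : 0 < r) (z : Fin d) : ∑ i, ∫ U, unitProj (firstCols hrd U) z i ^ 2 ∂μ = 1 := by
  rw [← integral_finsetSum _ fun i _ => by simpa [sq] using integrable_unitProj_mul hrd z i i]
  have hsum : ∀ᵐ U ∂μ, ∑ i, unitProj (firstCols hrd U) z i ^ 2 = 1 := by
    filter_upwards [ae_entry_ne_zero z (Fin.castLE hrd ⟨0, hr⟩)] with U hU
    exact sum_unitProj_sq _ (transpose_firstCols_mul_firstCols hrd U)
      (gram_firstCols_apply_self_ne_zero hrd hr hU)
  simp [integral_congr_ae hsum]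

lemma integral_unitProj_sq_of_ne [IsProbabilityMeasure μ] [μ.IsMulLeftInvariant] (hrd : r ≤ d)
    (hr : 0 < r) {z i : Fin d} (hi : i ≠ z) :
    ∫ U, unitProj (firstCols hrd U) z i ^ 2 ∂μ = (d - r) / (d * (d - 1)) := by
  have hd : 1 < d := by simpa using Fintype.one_lt_card_iff.mpr ⟨i, z, hi⟩
  have hsum := sum_integral_unitProj_sq (μ := μ) hrd hr z
  rw [← Finset.add_sum_erase _ _ (Finset.mem_univ z),
    Finset.sum_congr rfl fun j hj => integral_unitProj_sq_eq hrd (Finset.ne_of_mem_erase hj) hi,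
    Finset.sum_const, Finset.card_erase_of_mem (Finset.mem_univ z), Finset.card_univ,
    Fintype.card_fin, integral_unitProj_self_sq, nsmul_eq_mul, Nat.cast_sub hd.le,
    Nat.cast_one] at hsum
  have hd' : (1 : ℝ) < d := by exact_mod_cast hd
  rw [eq_div_iff (by nlinarith)]
  field_simp at hsum
  linear_combination hsum

lemma integral_unitProj_mul_unitProj [IsProbabilityMeasure μ] [μ.IsMulLeftInvariant]
    (hrd : r ≤ d) (hr : 0 < r) (z i j : Fin d) :
    ∫ U, unitProj (firstCols hrd U) z i * unitProj (firstCols hrd U) z j ∂μ =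
      if i = j then (if i = z then (r / d : ℝ) else (d - r) / (d * (d - 1))) else 0 := by
  split_ifs with hij hiz
  · subst hij hiz
    simpa [sq] using integral_unitProj_self_sq (μ := μ) hrd i
  · subst hij
    simpa [sq] using integral_unitProj_sq_of_ne (μ := μ) hrd hr hiz
  · exact integral_unitProj_mul_of_ne hrd hij

end FirstColumns

section Transfer

variable {d r : ℕ}

lemma mulVecE_single_apply {m n : ℕ} (B : Matrix (Fin m) (Fin n) ℝ) (z : Fin n) (i : Fin m) :
    mulVecE B (EuclideanSpace.single z 1) i = B i z := by
  simp [mulVecE, mulVec, dotProduct]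

lemma inv_norm_smul_mulVecE_single_apply (A : Matrix (Fin d) (Fin r) ℝ) (z i : Fin d) :
    (‖mulVecE Aᵀ (EuclideanSpace.single z 1)‖⁻¹ •
      mulVecE (A * Aᵀ) (EuclideanSpace.single z 1)) i = unitProj A z i := by
  have hnorm : ‖mulVecE Aᵀ (EuclideanSpace.single z 1)‖ = √((A * Aᵀ) z z) := by
    simp [EuclideanSpace.norm_eq, mulVecE_single_apply, mul_apply, sq]
  rw [PiLp.smul_apply, mulVecE_single_apply, hnorm, smul_eq_mul, unitProj, div_eq_inv_mul]

lemma integral_unitProj_mul_of_map_eq {Ω : Type*} [MeasurableSpace Ω] {ℙ' : Measure Ω}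
    {μ : Measure (Orth d)} [IsProbabilityMeasure μ] (hrd : r ≤ d)
    {P : Ω → Matrix (Fin d) (Fin r) ℝ}
    (hP : ℙ'.map P = μ.map fun U => √((d : ℝ) / r) • firstCols hrd U) (z i j : Fin d) :
    ∫ ω, unitProj (P ω) z i * unitProj (P ω) z j ∂ℙ' =
      d / r * ∫ U, unitProj (firstCols hrd U) z i * unitProj (firstCols hrd U) z j ∂μ := by
  have hG : Measurable fun U => √((d : ℝ) / r) • firstCols hrd U :=
    (measurable_firstCols hrd).const_smul (√((d : ℝ) / r))
  have hid : IdentDistrib P (fun U => √((d : ℝ) / r) • firstCols hrd U) ℙ' μ :=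
    ⟨.of_map_ne_zero (hP ▸ (Measure.isProbabilityMeasure_map hG.aemeasurable).ne_zero),
      hG.aemeasurable, hP⟩
  have h := (hid.comp (u := fun A => unitProj A z i * unitProj A z j)
    ((measurable_unitProj z i).mul (measurable_unitProj z j))).integral_eq
  simp only [Function.comp_def, unitProj_smul _ _ (Real.sqrt_nonneg _), Pi.smul_apply,
    smul_eq_mul] at h
  rw [h, ← integral_const_mul]
  congr 1 with U
  linear_combination (unitProj (firstCols hrd U) z i * unitProj (firstCols hrd U) z j) *
    Real.sq_sqrt (by positivity : (0 : ℝ) ≤ d / r)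

end Transfer

end HaarProjection

open HaarProjection in
/-- For a (d,r)-Haar matrix `P` and `u := PPᵀe₁/‖Pᵀe₁‖`,
`E[uuᵀ] = (d(r−1))/(r(d−1)) e₁e₁ᵀ + ((d−r)/(r(d−1))) I_d` (entrywise expectations). -/
theorem stmt13 {d r : ℕ} (hd : 2 ≤ d) (hr : 1 ≤ r) (hrd : r ≤ d)
    {Ω : Type*} [MeasureSpace Ω]
    (P : Ω → Matrix (Fin d) (Fin r) ℝ) (hP : IsHaarMatrix ℙ hrd P)
    (e₁ : EuclideanSpace ℝ (Fin d)) (he₁ : e₁ = EuclideanSpace.single ⟨0, by omega⟩ 1)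
    (u : Ω → EuclideanSpace ℝ (Fin d))
    (hu : ∀ ω, u ω = ‖mulVecE (P ω)ᵀ e₁‖⁻¹ • mulVecE (P ω * (P ω)ᵀ) e₁) :
    (Matrix.of fun i j => ∫ ω, u ω i * u ω j) =
      (((d : ℝ) * ((r : ℝ) - 1)) / ((r : ℝ) * ((d : ℝ) - 1))) •
          Matrix.vecMulVec (fun i => e₁ i) (fun j => e₁ j)
        + (((d : ℝ) - (r : ℝ)) / ((r : ℝ) * ((d : ℝ) - 1))) •
          (1 : Matrix (Fin d) (Fin d) ℝ) := by
  obtain ⟨μ, ⟨hμ, hinv⟩, hmap⟩ := hP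
  have : μ.IsMulLeftInvariant := ⟨hinv⟩
  subst he₁
  set z : Fin d := ⟨0, by omega⟩
  have hu_apply (ω : Ω) (i : Fin d) : u ω i = unitProj (P ω) z i := by
    rw [hu, inv_norm_smul_mulVecE_single_apply]
  have hd1 : (d : ℝ) - 1 ≠ 0 := by
    have : (2 : ℝ) ≤ d := by exact_mod_cast hd
    linarith
  have hr0 : (r : ℝ) ≠ 0 := by positivity
  ext i j
  simp only [of_apply, hu_apply, integral_unitProj_mul_of_map_eq hrd hmap,
    integral_unitProj_mul_unitProj hrd hr, Matrix.add_apply, Matrix.smul_apply, vecMulVec_apply,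
    one_apply, PiLp.single_apply, smul_eq_mul]
  rcases eq_or_ne i j with rfl | hij
  · by_cases hi : i = z
    · simp [hi]
      field_simp
      ring
    · simp [hi]
      field_simp
  · by_cases hi : i = z
    · simp [hij, hi ▸ hij.symm]
    · simp [hij, hi]

end
end
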